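/- arXiv:2604.23534 — 7 statements merged into one kernel-verified Lean document; each statement's English description precedes it below -/
import Mathlib

section
/- Let μ̃ : Ω → ℝ be any bounded measurable function and set m̃ := E[r·μ̃ | 𝒢]. Then E[r·(Y − m̃) + m̃ − ψ₀] = 0; equivalently, E[r·(Y − m̃)] + E[m̃] = E[r·Y]. In particular, the mean of the influence function φ(Z; ψ₀, μ̃, r) = r(Y − m̃) + m̃ − ψ₀ is zero for every choice of the outcome-regression function μ̃, i.e., the functional is globally robust to misspecification of the outcome regression. -/
open MeasureTheory

/-- Global robustness of the influence function to misspecification of the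
outcome regression: for any bounded measurable `μ̃`, with `m̃ := E[r·μ̃ | 𝒢]`,
the influence function `r·(Y − m̃) + m̃ − ψ₀` has mean zero, where
`ψ₀ = E[r·Y]`, provided `r ≥ 0` is bounded measurable with `E[r | 𝒢] = 1`
a.s. and `Y` is bounded measurable. -/
theorem influence_function_mean_zero_of_misspecified_outcome
    {Ω : Type*} (mG : MeasurableSpace Ω) {mF : MeasurableSpace Ω} (P : Measure Ω) [IsProbabilityMeasure P]
    (hG : mG ≤ mF)
    (r Y μt : Ω → ℝ)
    (hr_meas : Measurable r) (hr_nonneg : ∀ ω, 0 ≤ r ω)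
    (hr_bdd : ∃ C : ℝ, ∀ ω, |r ω| ≤ C)
    (hr_cond : (P[r | mG]) =ᵐ[P] fun _ => (1 : ℝ))
    (hY_meas : Measurable Y) (hY_bdd : ∃ C : ℝ, ∀ ω, |Y ω| ≤ C)
    (hμt_meas : Measurable μt) (hμt_bdd : ∃ C : ℝ, ∀ ω, |μt ω| ≤ C) :
    ∫ ω, (r ω * (Y ω - (P[fun ω' => r ω' * μt ω' | mG]) ω)
        + (P[fun ω' => r ω' * μt ω' | mG]) ω
        - ∫ ω', r ω' * Y ω' ∂P) ∂P = 0 := by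
  obtain ⟨Cr, hCr⟩ := hr_bdd
  obtain ⟨CY, hCY⟩ := hY_bdd
  obtain ⟨Cμ, hCμ⟩ := hμt_bdd
  set m : Ω → ℝ := P[fun ω' => r ω' * μt ω' | mG] with hm_def
  -- integrabilities
  have hr_int : Integrable r P :=
    (integrable_const Cr).mono' (hr_meas.aestronglyMeasurable (μ := P))
      (Filter.Eventually.of_forall fun ω => by simpa using hCr ω)
  have hrY_int : Integrable (fun ω => r ω * Y ω) P := by
    have hY_int : Integrable Y P :=
      (integrable_const CY).mono' (hY_meas.aestronglyMeasurable (μ := P))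
        (Filter.Eventually.of_forall fun ω => by simpa using hCY ω)
    exact hY_int.bdd_mul (hr_meas.aestronglyMeasurable (μ := P)) (Filter.Eventually.of_forall fun ω => by simpa using hCr ω)
  have hm_int : Integrable m P := integrable_condExp
  have hrm_int : Integrable (fun ω => r ω * m ω) P :=
    hm_int.bdd_mul (hr_meas.aestronglyMeasurable (μ := P)) (Filter.Eventually.of_forall fun ω => by simpa using hCr ω)
  have hmr_int : Integrable (m * r) P := by
    simpa [mul_comm] using (show Integrable (r * m) P from hrm_int)
  -- ∫ r * m = ∫ m
  have hm_sm : StronglyMeasurable[mG] m := stronglyMeasurable_condExp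
  have hpull : P[m * r | mG] =ᵐ[P] m * P[r | mG] :=
    condExp_mul_of_stronglyMeasurable_left hm_sm hmr_int hr_int
  have hmul1 : m * P[r | mG] =ᵐ[P] m := by
    filter_upwards [hr_cond] with ω hω
    simp [Pi.mul_apply, hω]
  have h1 : ∫ ω, r ω * m ω ∂P = ∫ ω, m ω ∂P := by
    calc ∫ ω, r ω * m ω ∂P = ∫ ω, (m * r) ω ∂P := by
          simp [mul_comm]
      _ = ∫ ω, (P[m * r | mG]) ω ∂P := (integral_condExp hG).symm
      _ = ∫ ω, m ω ∂P := integral_congr_ae (hpull.trans hmul1)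
  -- now expand
  have hsplit : ∀ ω, r ω * (Y ω - m ω) + m ω - (∫ ω', r ω' * Y ω' ∂P)
      = (r ω * Y ω - r ω * m ω + m ω) - (∫ ω', r ω' * Y ω' ∂P) := by
    intro ω; ring
  rw [show (fun ω => r ω * (Y ω - m ω) + m ω - ∫ ω', r ω' * Y ω' ∂P)
      = fun ω => (r ω * Y ω - r ω * m ω + m ω) - (∫ ω', r ω' * Y ω' ∂P) from
      funext hsplit]
  have hA : Integrable (fun ω => r ω * Y ω - r ω * m ω) P := hrY_int.sub hrm_int
  have hB : Integrable (fun ω => r ω * Y ω - r ω * m ω + m ω) P := hA.add hm_int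
  rw [integral_sub hB (integrable_const _), integral_add hA hm_int,
    integral_sub hrY_int hrm_int, integral_const, h1]
  simp
end

section
/- ‖r_δ − 1 − ⟨δ, s̃⟩‖_{L²(P)} ≤ 4·e^{2C}·M_s²·‖δ‖². (Second-order expansion of the exponentially tilted conditional density ratio around δ = 0: the density ratio equals 1 + ⟨δ, s̃⟩ up to a remainder whose L² norm is quadratic in ‖δ‖, with explicit constant 4e^{2C}M_s².) -/
open MeasureTheory
open scoped RealInnerProductSpace

private lemma exp_abs_sub_one_le {t c : ℝ} (h : |t| ≤ c) :
    |Real.exp t - 1| ≤ |t| * Real.exp c := by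
  have hec : Real.exp |t| ≤ Real.exp c := Real.exp_le_exp.2 h
  have h1 : (1:ℝ) ≤ Real.exp |t| := Real.one_le_exp (abs_nonneg t)
  have key : |Real.exp t - 1| ≤ |t| * Real.exp |t| := by
    rcases le_or_gt 0 t with ht | ht
    · rw [abs_of_nonneg ht, abs_of_nonneg (by nlinarith [Real.add_one_le_exp t] : (0:ℝ) ≤ Real.exp t - 1)]
      have hA : -t + 1 ≤ Real.exp (-t) := Real.add_one_le_exp (-t)
      have hprod : Real.exp t * Real.exp (-t) = 1 := by rw [← Real.exp_add]; simp
      nlinarith [Real.exp_pos t, mul_le_mul_of_nonneg_left hA (Real.exp_pos t).le]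
    · rw [abs_of_neg ht, abs_of_nonpos (by nlinarith [Real.exp_lt_one_iff.mpr ht] : Real.exp t - 1 ≤ 0)]
      nlinarith [Real.add_one_le_exp t, Real.one_le_exp (by linarith : (0:ℝ) ≤ -t)]
  exact key.trans (by nlinarith [abs_nonneg t])

private lemma exp_taylor2_le {t c : ℝ} (h : |t| ≤ c) :
    |Real.exp t - 1 - t| ≤ t ^ 2 * Real.exp c := by
  have hec : Real.exp |t| ≤ Real.exp c := Real.exp_le_exp.2 h
  have h1 : (1:ℝ) ≤ Real.exp |t| := Real.one_le_exp (abs_nonneg t)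
  have hnn : (0:ℝ) ≤ Real.exp t - 1 - t := by nlinarith [Real.add_one_le_exp t]
  rw [abs_of_nonneg hnn]
  have hA : -t + 1 ≤ Real.exp (-t) := Real.add_one_le_exp (-t)
  have hprod : Real.exp t * Real.exp (-t) = 1 := by rw [← Real.exp_add]; simp
  have hEt : Real.exp t * (1 - t) ≤ 1 := by
    nlinarith [mul_le_mul_of_nonneg_left hA (Real.exp_pos t).le]
  have key : Real.exp t - 1 - t ≤ t ^ 2 * Real.exp |t| := by
    rcases le_or_gt 0 t with ht | ht
    · rw [abs_of_nonneg ht]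
      nlinarith [Real.exp_pos t, mul_le_mul_of_nonneg_right hEt (by linarith : (0:ℝ) ≤ 1 + t)]
    · have h2 : Real.exp t - 1 - t ≤ t ^ 2 := by
        nlinarith [mul_le_mul_of_nonneg_right hEt (by linarith : (0:ℝ) ≤ 1), Real.exp_pos t]
      nlinarith [sq_nonneg t]
  nlinarith [sq_nonneg t]

private lemma condexp_const_inner' {Ω : Type*} {mG mF : MeasurableSpace Ω}
    (hG : mG ≤ mF) (P : Measure Ω) [IsFiniteMeasure P] {E : Type*} [NormedAddCommGroup E]
    [InnerProductSpace ℝ E] [CompleteSpace E]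
    {f : Ω → E} (hf : Integrable f P) (c : E) :
    (fun ω => (⟪c, (P[f|mG]) ω⟫ : ℝ)) =ᵐ[P] P[fun ω => (⟪c, f ω⟫ : ℝ)|mG] := by
  haveI : SigmaFinite (P.trim hG) := inferInstance
  refine ae_eq_condExp_of_forall_setIntegral_eq hG (hf.const_inner c) ?_ ?_ ?_
  · exact fun s _ _ => (integrable_condExp.integrableOn).const_inner c
  · intro s hs hμs
    rw [integral_inner integrable_condExp.integrableOn,
      setIntegral_condExp hG hf hs, ← integral_inner hf.integrableOn]
  · exact (StronglyMeasurable.aestronglyMeasurable stronglyMeasurable_condExp).const_inner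

/-- Second-order expansion of the exponentially tilted conditional density
ratio around `δ = 0`: with `ν := E[exp⟨δ,S⟩ | 𝒢]`, `r_δ := exp⟨δ,S⟩/ν` and
`s̃ := S − E[S | 𝒢]`, whenever `‖S‖ ≤ M_s` a.s. and `‖δ‖·M_s ≤ C`, the `L²(P)`
norm of `r_δ − 1 − ⟨δ, s̃⟩` is at most `4·e^{2C}·M_s²·‖δ‖²`. -/
theorem tilted_density_ratio_second_order_expansion
    {Ω : Type*} (mG : MeasurableSpace Ω) {mF : MeasurableSpace Ω} (P : Measure Ω) [IsProbabilityMeasure P]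
    (hG : mG ≤ mF)
    {q : ℕ} (S : Ω → EuclideanSpace ℝ (Fin q))
    (hS_meas : Measurable S)
    (Ms C : ℝ) (hMs : 0 < Ms) (hC : 0 < C)
    (hS_bdd : ∀ᵐ ω ∂P, ‖S ω‖ ≤ Ms)
    (δ : EuclideanSpace ℝ (Fin q)) (hδ : ‖δ‖ * Ms ≤ C)
    (hν_pos : ∀ᵐ ω ∂P, 0 < (P[fun ω' => Real.exp ⟪δ, S ω'⟫ | mG]) ω) :
    eLpNorm
      (fun ω =>
        Real.exp ⟪δ, S ω⟫ / (P[fun ω' => Real.exp ⟪δ, S ω'⟫ | mG]) ω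
          - 1 - ⟪δ, S ω - (P[S | mG]) ω⟫) 2 P
      ≤ ENNReal.ofReal (4 * Real.exp (2 * C) * Ms ^ 2 * ‖δ‖ ^ 2) := by
  haveI : SigmaFinite (P.trim hG) := inferInstance
  have hA0 : (0:ℝ) ≤ ‖δ‖ * Ms := mul_nonneg (norm_nonneg _) hMs.le
  have heC1 : (1:ℝ) ≤ Real.exp C := Real.one_le_exp hC.le
  have heCpos : (0:ℝ) < Real.exp C := Real.exp_pos C
  have hx_meas : Measurable (fun ω => (⟪δ, S ω⟫ : ℝ)) :=
    Measurable.inner measurable_const hS_meas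
  have hx_measF : @Measurable Ω ℝ mF _ (fun ω => (⟪δ, S ω⟫ : ℝ)) :=
    hx_meas
  have hx_bdd : ∀ᵐ ω ∂P, |(⟪δ, S ω⟫ : ℝ)| ≤ ‖δ‖ * Ms := hS_bdd.mono fun ω h =>
    (abs_real_inner_le_norm δ (S ω)).trans (mul_le_mul_of_nonneg_left h (norm_nonneg δ))
  have hxC : ∀ᵐ ω ∂P, |(⟪δ, S ω⟫ : ℝ)| ≤ C := hx_bdd.mono fun ω h => h.trans hδ
  have hx_int : Integrable (fun ω => (⟪δ, S ω⟫ : ℝ)) P :=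
    (integrable_const (‖δ‖ * Ms)).mono' hx_measF.aestronglyMeasurable
      (hx_bdd.mono fun ω h => by simpa [Real.norm_eq_abs] using h)
  have hS_int : Integrable S P :=
    (integrable_const Ms).mono' (hS_meas.aestronglyMeasurable) hS_bdd
  have hf_measF : @Measurable Ω ℝ mF _ (fun ω => Real.exp ⟪δ, S ω⟫) :=
    Real.measurable_exp.comp hx_measF
  have hf_bdd : ∀ᵐ ω ∂P, ‖Real.exp ⟪δ, S ω⟫‖ ≤ Real.exp C := hxC.mono fun ω h => by
    rw [Real.norm_eq_abs, abs_of_pos (Real.exp_pos _)]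
    exact Real.exp_le_exp.2 ((le_abs_self _).trans h)
  have hf_int : Integrable (fun ω => Real.exp ⟪δ, S ω⟫) P :=
    (integrable_const (Real.exp C)).mono' hf_measF.aestronglyMeasurable hf_bdd
  -- generic sandwich bound for conditional expectations
  have sandwich : ∀ (g : Ω → ℝ) (c : ℝ), Integrable g P → (∀ᵐ ω ∂P, |g ω| ≤ c) →
      ∀ᵐ ω ∂P, |(P[g|mG]) ω| ≤ c := by
    intro g c hg hgc
    have hub := condExp_mono (m := mG) hg (integrable_const c)
      (hgc.mono fun ω h => (abs_le.1 h).2)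
    have hlb := condExp_mono (m := mG) (integrable_const (-c)) hg
      (hgc.mono fun ω h => (abs_le.1 h).1)
    rw [condExp_const hG] at hub hlb
    filter_upwards [hub, hlb] with ω h1 h2
    exact abs_le.2 ⟨h2, h1⟩
  -- lower bound on ν
  have hν_lb : ∀ᵐ ω ∂P, Real.exp (-C) ≤ (P[fun ω' => Real.exp ⟪δ, S ω'⟫|mG]) ω := by
    have hge : (fun _ : Ω => Real.exp (-C)) ≤ᵐ[P] fun ω => Real.exp ⟪δ, S ω⟫ :=
      hxC.mono fun ω h => Real.exp_le_exp.2 (neg_le_of_abs_le h)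
    have h2 := condExp_mono (m := mG) (integrable_const (Real.exp (-C))) hf_int hge
    rw [condExp_const hG] at h2
    exact h2
  -- bound on conditional mean of x
  have hm_bdd : ∀ᵐ ω ∂P,
      |(P[fun ω' => (⟪δ, S ω'⟫ : ℝ)|mG]) ω| ≤ ‖δ‖ * Ms := sandwich _ _ hx_int hx_bdd
  -- pointwise Taylor bounds
  have h1 : ∀ᵐ ω ∂P, |Real.exp ⟪δ, S ω⟫ - 1 - ⟪δ, S ω⟫| ≤ (‖δ‖ * Ms)^2 * Real.exp C := by
    filter_upwards [hx_bdd, hxC] with ω hA' hC'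
    refine (exp_taylor2_le hC').trans ?_
    have : (⟪δ, S ω⟫:ℝ)^2 ≤ (‖δ‖ * Ms)^2 := by nlinarith [abs_nonneg (⟪δ, S ω⟫:ℝ), sq_abs (⟪δ, S ω⟫:ℝ)]
    nlinarith
  have h1' : ∀ᵐ ω ∂P, |Real.exp ⟪δ, S ω⟫ - 1| ≤ (‖δ‖ * Ms) * Real.exp C := by
    filter_upwards [hx_bdd, hxC] with ω hA' hC'
    refine (exp_abs_sub_one_le hC').trans ?_
    nlinarith
  -- integrability of remainders
  have hF_int : Integrable ((fun ω => Real.exp ⟪δ, S ω⟫) - (fun _ => (1:ℝ))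
      - fun ω => (⟪δ, S ω⟫ : ℝ)) P := (hf_int.sub (integrable_const 1)).sub hx_int
  have hF1_int : Integrable ((fun ω => Real.exp ⟪δ, S ω⟫) - fun _ => (1:ℝ)) P :=
    hf_int.sub (integrable_const 1)
  -- conditional expectation of f - 1 - x
  have hsub : P[(fun ω => Real.exp ⟪δ, S ω⟫) - (fun _ => (1:ℝ)) - fun ω => (⟪δ, S ω⟫ : ℝ)|mG]
      =ᵐ[P] fun ω => (P[fun ω' => Real.exp ⟪δ, S ω'⟫|mG]) ω - 1
        - (P[fun ω' => (⟪δ, S ω'⟫ : ℝ)|mG]) ω := by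
    have e1 := condExp_sub (m := mG) hF1_int hx_int
    have e2 := condExp_sub (m := mG) hf_int (integrable_const (1:ℝ))
    rw [condExp_const hG] at e2
    filter_upwards [e1, e2] with ω he1 he2
    simp only [Pi.sub_apply] at he1 he2 ⊢
    rw [he1, he2]
  have hsub1 : P[(fun ω => Real.exp ⟪δ, S ω⟫) - fun _ => (1:ℝ)|mG]
      =ᵐ[P] fun ω => (P[fun ω' => Real.exp ⟪δ, S ω'⟫|mG]) ω - 1 := by
    have e2 := condExp_sub (m := mG) hf_int (integrable_const (1:ℝ))
    rw [condExp_const hG] at e2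
    filter_upwards [e2] with ω he2
    simp only [Pi.sub_apply] at he2 ⊢
    rw [he2]
  have h2 : ∀ᵐ ω ∂P, |(P[fun ω' => Real.exp ⟪δ, S ω'⟫|mG]) ω - 1
      - (P[fun ω' => (⟪δ, S ω'⟫ : ℝ)|mG]) ω| ≤ (‖δ‖ * Ms)^2 * Real.exp C := by
    have hb : ∀ᵐ ω ∂P, |(((fun ω => Real.exp ⟪δ, S ω⟫) - (fun _ => (1:ℝ))
        - fun ω => (⟪δ, S ω⟫ : ℝ) : Ω → ℝ)) ω| ≤ (‖δ‖ * Ms)^2 * Real.exp C := by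
      filter_upwards [h1] with ω h
      simpa [Pi.sub_apply] using h
    filter_upwards [sandwich _ _ hF_int hb, hsub] with ω hs he
    rw [← he]; exact hs
  have h3 : ∀ᵐ ω ∂P, |(P[fun ω' => Real.exp ⟪δ, S ω'⟫|mG]) ω - 1|
      ≤ (‖δ‖ * Ms) * Real.exp C := by
    have hb : ∀ᵐ ω ∂P, |(((fun ω => Real.exp ⟪δ, S ω⟫) - fun _ => (1:ℝ) : Ω → ℝ)) ω|
        ≤ (‖δ‖ * Ms) * Real.exp C := by
      filter_upwards [h1'] with ω h
      simpa [Pi.sub_apply] using h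
    filter_upwards [sandwich _ _ hF1_int hb, hsub1] with ω hs he
    rw [← he]; exact hs
  -- inner product commutes with conditional expectation
  have hm_eq : (fun ω => (⟪δ, (P[S|mG]) ω⟫ : ℝ)) =ᵐ[P] P[fun ω' => (⟪δ, S ω'⟫ : ℝ)|mG] :=
    condexp_const_inner' hG P hS_int δ
  -- final a.e. bound
  have hbound : ∀ᵐ ω ∂P,
      ‖Real.exp ⟪δ, S ω⟫ / (P[fun ω' => Real.exp ⟪δ, S ω'⟫ | mG]) ω
        - 1 - ⟪δ, S ω - (P[S | mG]) ω⟫‖ ≤ 4 * Real.exp (2 * C) * Ms ^ 2 * ‖δ‖ ^ 2 := by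
    filter_upwards [hν_pos, hν_lb, h1, h2, h3, hm_bdd, hx_bdd, hm_eq] with ω hv hvlb hb1 hb2 hb3 hbm hbx hme
    rw [Real.norm_eq_abs, inner_sub_right, hme]
    set e := Real.exp ⟪δ, S ω⟫ with he_def
    set v := (P[fun ω' => Real.exp ⟪δ, S ω'⟫|mG]) ω with hv_def
    set xx := (⟪δ, S ω⟫ : ℝ) with hxx_def
    set mm := (P[fun ω' => (⟪δ, S ω'⟫ : ℝ)|mG]) ω with hmm_def
    have key : e / v - 1 - (xx - mm)
        = ((e - 1 - xx) - (v - 1 - mm) - (v - 1) * (xx - mm)) / v := by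
      field_simp
      ring
    rw [key, abs_div, abs_of_pos hv, div_le_iff₀ hv]
    have hxm : |xx - mm| ≤ 2 * (‖δ‖ * Ms) := (abs_sub _ _).trans (by linarith)
    have hnum : |(e - 1 - xx) - (v - 1 - mm) - (v - 1) * (xx - mm)|
        ≤ 4 * (‖δ‖ * Ms)^2 * Real.exp C := by
      have t1 : |(e - 1 - xx) - (v - 1 - mm) - (v - 1) * (xx - mm)|
          ≤ |e - 1 - xx| + |v - 1 - mm| + |v - 1| * |xx - mm| := by
        calc |(e - 1 - xx) - (v - 1 - mm) - (v - 1) * (xx - mm)|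
            ≤ |(e - 1 - xx) - (v - 1 - mm)| + |(v - 1) * (xx - mm)| := abs_sub _ _
          _ ≤ |e - 1 - xx| + |v - 1 - mm| + |(v - 1) * (xx - mm)| := by
              have := abs_sub (e - 1 - xx) (v - 1 - mm)
              linarith
          _ = |e - 1 - xx| + |v - 1 - mm| + |v - 1| * |xx - mm| := by rw [abs_mul]
      have t2 : |v - 1| * |xx - mm| ≤ ((‖δ‖ * Ms) * Real.exp C) * (2 * (‖δ‖ * Ms)) :=
        mul_le_mul hb3 hxm (abs_nonneg _) (by positivity)
      nlinarith
    have heq : Real.exp (2 * C) * Real.exp (-C) = Real.exp C := by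
      rw [← Real.exp_add]; ring_nf
    have hK0 : (0:ℝ) ≤ 4 * Real.exp (2 * C) * Ms ^ 2 * ‖δ‖ ^ 2 := by positivity
    nlinarith [mul_le_mul_of_nonneg_left hvlb hK0]
  refine le_trans (eLpNorm_le_of_ae_bound hbound) ?_
  simp [measure_univ, ENNReal.one_rpow]
end

section
/- Let μ : Ω → ℝ be a measurable random variable with |μ| ≤ M almost surely for a constant M < ∞. Then ‖E[μ·r_δ | 𝒢] − E[μ | 𝒢] − ⟨δ, E[μ·s̃ | 𝒢]⟩‖_{L²(P)} ≤ 4·e^{2C}·M·M_s²·‖δ‖². (Second-order expansion of the tilted conditional mean E_{g_δ}[μ | 𝒢] = E[μ·r_δ | 𝒢] around δ = 0, with linear term ⟨δ, E[μ s̃ | 𝒢]⟩ and quadratic remainder.) -/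
open MeasureTheory
open scoped RealInnerProductSpace

lemma aux_exp1 (y : ℝ) : |Real.exp y - 1| ≤ |y| * Real.exp |y| := by
  rcases le_or_gt 0 y with hy | hy
  · rw [abs_of_nonneg hy, abs_of_nonneg (by linarith [Real.one_le_exp hy])]
    have h1 := Real.add_one_le_exp (-y)
    have h2 : Real.exp (-y) * Real.exp y = 1 := by rw [← Real.exp_add]; simp
    nlinarith [Real.exp_pos y]
  · rw [abs_of_neg hy, abs_of_nonpos (by nlinarith [Real.exp_lt_one_iff.2 hy])]
    have h1 := Real.add_one_le_exp y
    have h2 := Real.one_le_exp (neg_nonneg.2 hy.le)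
    nlinarith

lemma aux_exp2 (y : ℝ) : |Real.exp y - 1 - y| ≤ y ^ 2 * Real.exp |y| := by
  have h0 := Real.add_one_le_exp y
  rw [abs_of_nonneg (by linarith)]
  have h1 := Real.add_one_le_exp (-y)
  have h2 : Real.exp (-y) * Real.exp y = 1 := by rw [← Real.exp_add]; simp
  rcases le_or_gt 0 y with hy | hy
  · rw [abs_of_nonneg hy]
    have h4 : (1 + y) * (-y + 1) ≤ (1 + y) * Real.exp (-y) :=
      mul_le_mul_of_nonneg_left h1 (by linarith)
    have h5 : ((1 + y) * (-y + 1)) * Real.exp y ≤ ((1 + y) * Real.exp (-y)) * Real.exp y :=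
      mul_le_mul_of_nonneg_right h4 (Real.exp_pos y).le
    have h6 : ((1 + y) * Real.exp (-y)) * Real.exp y = 1 + y := by
      rw [mul_assoc, h2, mul_one]
    rw [h6] at h5
    nlinarith [Real.exp_pos y]
  · rw [abs_of_neg hy]
    have h3 := Real.one_le_exp (neg_nonneg.2 hy.le)
    -- e^y (1 - y) ≤ 1, and (1+y+y^2)(1-y) = 1 - y^3 ≥ 1
    have h4 : Real.exp y * (-y + 1) ≤ Real.exp y * Real.exp (-y) :=
      mul_le_mul_of_nonneg_left h1 (Real.exp_pos y).le
    have h6 : Real.exp y * Real.exp (-y) = 1 := by rw [← Real.exp_add]; simp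
    rw [h6] at h4
    nlinarith [Real.exp_pos y]


lemma condexp_clm_comm {α E F : Type*} [NormedAddCommGroup E] [NormedSpace ℝ E] [CompleteSpace E]
    [NormedAddCommGroup F] [NormedSpace ℝ F] [CompleteSpace F]
    {m m0 : MeasurableSpace α} (hm : m ≤ m0) {μ : Measure α} [IsFiniteMeasure μ]
    (T : E →L[ℝ] F) {f : α → E} (hf : Integrable f μ) :
    (μ[fun x => T (f x)|m]) =ᵐ[μ] fun x => T ((μ[f|m]) x) := by
  haveI : SigmaFinite (μ.trim hm) := inferInstance
  refine (ae_eq_condExp_of_forall_setIntegral_eq hm (T.integrable_comp hf) ?_ ?_ ?_).symm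
  · intro s _ _
    exact (T.integrable_comp integrable_condExp).integrableOn
  · intro s hs hμs
    rw [T.integral_comp_comm integrable_condExp.integrableOn,
      T.integral_comp_comm hf.integrableOn, setIntegral_condExp hm hf hs]
  · exact StronglyMeasurable.aestronglyMeasurable
      (T.continuous.comp_stronglyMeasurable stronglyMeasurable_condExp)

lemma ae_norm_condexp_le {α : Type*} {m m0 : MeasurableSpace α} (hm : m ≤ m0)
    {μ : Measure α} [IsFiniteMeasure μ] {q : ℕ} {f : α → EuclideanSpace ℝ (Fin q)}
    (hf : Integrable f μ) {R : ℝ} (hR : 0 ≤ R) (hbd : ∀ᵐ x ∂μ, ‖f x‖ ≤ R) :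
    ∀ᵐ x ∂μ, ‖(μ[f|m]) x‖ ≤ R := by
  obtain ⟨D, hDc, hDd⟩ := TopologicalSpace.exists_countable_dense (EuclideanSpace ℝ (Fin q))
  have key : ∀ v : EuclideanSpace ℝ (Fin q),
      ∀ᵐ x ∂μ, ⟪v, (μ[f|m]) x⟫ ≤ ‖v‖ * R := by
    intro v
    have h1 : (μ[fun x => ⟪v, f x⟫|m]) =ᵐ[μ] fun x => ⟪v, (μ[f|m]) x⟫ := by
      have := condexp_clm_comm hm (innerSL ℝ v) hf
      simpa using this
    have h2 : ∀ᵐ x ∂μ, |(μ[fun x => ⟪v, f x⟫|m]) x| ≤ ((‖v‖ * R).toNNReal : ℝ) := by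
      refine ae_bdd_condExp_of_ae_bdd ?_
      filter_upwards [hbd] with x hx
      rw [Real.coe_toNNReal _ (by positivity)]
      calc |⟪v, f x⟫| ≤ ‖v‖ * ‖f x‖ := abs_real_inner_le_norm v (f x)
        _ ≤ ‖v‖ * R := by
            exact mul_le_mul_of_nonneg_left hx (norm_nonneg v)
    filter_upwards [h1, h2] with x hx1 hx2
    rw [Real.coe_toNNReal _ (by positivity)] at hx2
    calc ⟪v, (μ[f|m]) x⟫ = (μ[fun x => ⟪v, f x⟫|m]) x := hx1.symm
      _ ≤ ‖v‖ * R := (abs_le.mp hx2).2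
  have keyD : ∀ᵐ x ∂μ, ∀ v ∈ D, ⟪v, (μ[f|m]) x⟫ ≤ ‖v‖ * R :=
    (ae_ball_iff hDc).mpr fun v _ => key v
  filter_upwards [keyD] with x hx
  set z := (μ[f|m]) x with hz
  have hall : ∀ v : EuclideanSpace ℝ (Fin q), ⟪v, z⟫ ≤ ‖v‖ * R := by
    intro v
    have hsub : D ⊆ {v | ⟪v, z⟫ ≤ ‖v‖ * R} := fun w hw => hx w hw
    have hcl : IsClosed {v : EuclideanSpace ℝ (Fin q) | ⟪v, z⟫ ≤ ‖v‖ * R} := by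
      apply isClosed_le
      · exact (continuous_id.inner continuous_const)
      · exact continuous_norm.mul continuous_const
    have : closure D ⊆ {v | ⟪v, z⟫ ≤ ‖v‖ * R} := hcl.closure_subset_iff.mpr hsub
    rw [hDd.closure_eq] at this
    exact this (Set.mem_univ v)
  have h := hall z
  rw [real_inner_self_eq_norm_sq] at h
  nlinarith [norm_nonneg z]


/-- Second-order expansion of the tilted conditional mean around `δ = 0`:
with `ν := E[exp⟨δ,S⟩ | 𝒢]`, `r_δ := exp⟨δ,S⟩/ν` and `s̃ := S − E[S | 𝒢]`,
for any measurable `μ` with `|μ| ≤ M` a.s., whenever `‖S‖ ≤ M_s` a.s. and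
`‖δ‖·M_s ≤ C`, the `L²(P)` norm of
`E[μ·r_δ | 𝒢] − E[μ | 𝒢] − ⟨δ, E[μ·s̃ | 𝒢]⟩` is at most `4·e^{2C}·M·M_s²·‖δ‖²`. -/
theorem tilted_conditional_mean_second_order_expansion
    {Ω : Type*} (mG : MeasurableSpace Ω) {mF : MeasurableSpace Ω} (P : Measure Ω) [IsProbabilityMeasure P]
    (hG : mG ≤ mF)
    {q : ℕ} (S : Ω → EuclideanSpace ℝ (Fin q))
    (hS_meas : Measurable S)
    (Ms C : ℝ) (hMs : 0 < Ms) (hC : 0 < C)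
    (hS_bdd : ∀ᵐ ω ∂P, ‖S ω‖ ≤ Ms)
    (δ : EuclideanSpace ℝ (Fin q)) (hδ : ‖δ‖ * Ms ≤ C)
    (hν_pos : ∀ᵐ ω ∂P, 0 < (P[fun ω' => Real.exp ⟪δ, S ω'⟫ | mG]) ω)
    (μ : Ω → ℝ) (hμ_meas : Measurable μ)
    (M : ℝ) (hM : ∀ᵐ ω ∂P, |μ ω| ≤ M) :
    eLpNorm
      (fun ω =>
        (P[fun ω' => μ ω' *
            (Real.exp ⟪δ, S ω'⟫ / (P[fun ω'' => Real.exp ⟪δ, S ω''⟫ | mG]) ω') | mG]) ω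
          - (P[μ | mG]) ω
          - ⟪δ, (P[fun ω' => μ ω' • (S ω' - (P[S | mG]) ω') | mG]) ω⟫) 2 P
      ≤ ENNReal.ofReal (4 * Real.exp (2 * C) * M * Ms ^ 2 * ‖δ‖ ^ 2) := by
  haveI : SigmaFinite (P.trim hG) := inferInstance
  set Y : Ω → ℝ := fun ω => ⟪δ, S ω⟫ with hY_def
  set X : Ω → ℝ := fun ω => Real.exp (Y ω) with hX_def
  set ν : Ω → ℝ := P[fun ω'' => Real.exp ⟪δ, S ω''⟫ | mG] with hν_def
  set ES : Ω → EuclideanSpace ℝ (Fin q) := P[S | mG] with hES_def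
  set G2 : Ω → EuclideanSpace ℝ (Fin q) := P[fun ω' => μ ω' • (S ω' - ES ω') | mG] with hG2_def
  have hνX : ν = P[X | mG] := rfl
  -- nonnegativity of M
  have hM0 : 0 ≤ M := by
    obtain ⟨ω, hω⟩ := hM.exists
    exact (abs_nonneg _).trans hω
  have hδ0 : (0:ℝ) ≤ ‖δ‖ := norm_nonneg δ
  -- bound on Y
  have hY_bdd : ∀ᵐ ω ∂P, |Y ω| ≤ ‖δ‖ * Ms := by
    filter_upwards [hS_bdd] with ω hω
    calc |Y ω| ≤ ‖δ‖ * ‖S ω‖ := abs_real_inner_le_norm δ (S ω)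
      _ ≤ ‖δ‖ * Ms := mul_le_mul_of_nonneg_left hω hδ0
  have hY_C : ∀ᵐ ω ∂P, |Y ω| ≤ C := by
    filter_upwards [hY_bdd] with ω hω; linarith
  -- measurability
  have hS_measF : Measurable[mF] S := hS_meas
  have hμ_measF : Measurable[mF] μ := hμ_meas
  have hY_meas : Measurable[mF] Y := Measurable.inner measurable_const hS_measF
  have hX_meas : Measurable[mF] X := Real.measurable_exp.comp hY_meas
  have hν_meas : Measurable[mG] ν := stronglyMeasurable_condExp.measurable
  have hES_sm : StronglyMeasurable[mG] ES := stronglyMeasurable_condExp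
  have hX_asm : AEStronglyMeasurable[mF] X P := hX_meas.aestronglyMeasurable
  have hY_asm : AEStronglyMeasurable[mF] Y P := hY_meas.aestronglyMeasurable
  have hμ_asm : AEStronglyMeasurable[mF] μ P := hμ_measF.aestronglyMeasurable
  have hS_asm : AEStronglyMeasurable[mF] S P := hS_measF.aestronglyMeasurable
  have hν_asm : AEStronglyMeasurable[mF] ν P := ((hν_meas.mono hG le_rfl)).aestronglyMeasurable
  have hνinv_asm : AEStronglyMeasurable[mF] (fun ω => (ν ω)⁻¹) P :=
    ((hν_meas.mono hG le_rfl).inv).aestronglyMeasurable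
  have hES_asm : AEStronglyMeasurable[mF] ES P := (hES_sm.mono hG).aestronglyMeasurable
  have hSES_asm : AEStronglyMeasurable[mF] (fun ω => S ω - ES ω) P := hS_asm.sub hES_asm
  -- basic bounds on X
  have hX_ub : ∀ᵐ ω ∂P, X ω ≤ Real.exp C := by
    filter_upwards [hY_C] with ω hω
    exact Real.exp_le_exp.mpr ((le_abs_self _).trans hω)
  have hX_lb : ∀ᵐ ω ∂P, Real.exp (-C) ≤ X ω := by
    filter_upwards [hY_C] with ω hω
    exact Real.exp_le_exp.mpr (by linarith [(abs_le.mp hω).1])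
  -- integrabilities
  have int_X : Integrable X P := by
    refine (integrable_const (Real.exp C)).mono' hX_asm ?_
    filter_upwards [hX_ub] with ω h
    rw [Real.norm_eq_abs, abs_of_pos (Real.exp_pos _)]; exact h
  have int_μ : Integrable μ P := by
    refine (integrable_const M).mono' hμ_asm ?_
    filter_upwards [hM] with ω h; rwa [Real.norm_eq_abs]
  have int_μX : Integrable (fun ω => μ ω * X ω) P := by
    refine (integrable_const (M * Real.exp C)).mono' (hμ_asm.mul hX_asm) ?_
    filter_upwards [hM, hX_ub] with ω h1 h2
    rw [Real.norm_eq_abs, abs_mul, abs_of_pos (Real.exp_pos _)]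
    exact mul_le_mul h1 h2 (Real.exp_pos _).le hM0
  have int_S : Integrable S P := by
    refine (integrable_const Ms).mono' hS_asm ?_
    exact hS_bdd
  -- bound on ES
  have hES_bdd : ∀ᵐ ω ∂P, ‖ES ω‖ ≤ Ms := ae_norm_condexp_le hG int_S hMs.le hS_bdd
  -- ν bounds
  have hν_lb : ∀ᵐ ω ∂P, Real.exp (-C) ≤ ν ω := by
    have h := condExp_mono (m := mG) (μ := P) (integrable_const (Real.exp (-C))) int_X
      (hX_lb.mono fun ω h => h)
    rw [condExp_const hG] at h
    filter_upwards [h] with ω hω using hω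
  have hν_ub : ∀ᵐ ω ∂P, |ν ω| ≤ Real.exp C := by
    have h : ∀ᵐ ω ∂P, |X ω| ≤ ((Real.exp C).toNNReal : ℝ) := by
      filter_upwards [hX_ub] with ω hω
      rw [Real.coe_toNNReal _ (Real.exp_pos _).le, abs_of_pos (Real.exp_pos _)]
      exact hω
    have := ae_bdd_condExp_of_ae_bdd (m := mG) h
    filter_upwards [this] with ω hω
    rwa [Real.coe_toNNReal _ (Real.exp_pos _).le] at hω
  have hν_pos' : ∀ᵐ ω ∂P, 0 < ν ω := by
    filter_upwards [hν_lb] with ω hω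
    exact lt_of_lt_of_le (Real.exp_pos _) hω
  have hνinv : ∀ᵐ ω ∂P, (ν ω)⁻¹ ≤ Real.exp C := by
    filter_upwards [hν_lb] with ω hω
    calc (ν ω)⁻¹ ≤ (Real.exp (-C))⁻¹ :=
          inv_anti₀ (Real.exp_pos _) hω
      _ = Real.exp C := by rw [Real.exp_neg, inv_inv]
  -- integrability of μ • (S - ES)
  have int_μs : Integrable (fun ω => μ ω • (S ω - ES ω)) P := by
    refine (integrable_const (M * (2 * Ms))).mono' (hμ_asm.smul hSES_asm) ?_
    filter_upwards [hM, hS_bdd, hES_bdd] with ω h1 h2 h3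
    rw [norm_smul, Real.norm_eq_abs]
    have : ‖S ω - ES ω‖ ≤ 2 * Ms := by
      calc ‖S ω - ES ω‖ ≤ ‖S ω‖ + ‖ES ω‖ := norm_sub_le _ _
        _ ≤ 2 * Ms := by linarith
    exact mul_le_mul h1 this (norm_nonneg _) hM0
  -- bound on G2
  have hG2_bdd : ∀ᵐ ω ∂P, ‖G2 ω‖ ≤ M * (2 * Ms) :=
    ae_norm_condexp_le hG int_μs (by positivity) (by
      filter_upwards [hM, hS_bdd, hES_bdd] with ω h1 h2 h3
      rw [norm_smul, Real.norm_eq_abs]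
      have : ‖S ω - ES ω‖ ≤ 2 * Ms := by
        calc ‖S ω - ES ω‖ ≤ ‖S ω‖ + ‖ES ω‖ := norm_sub_le _ _
          _ ≤ 2 * Ms := by linarith
      exact mul_le_mul h1 this (norm_nonneg _) hM0)
  -- pull-out 1
  have int_f1 : Integrable ((fun ω => (ν ω)⁻¹) * fun ω => μ ω * X ω) P := by
    refine (integrable_const (Real.exp C * (M * Real.exp C))).mono'
      (hνinv_asm.mul (hμ_asm.mul hX_asm)) ?_
    filter_upwards [hM, hX_ub, hνinv, hν_pos'] with ω h1 h2 h3 h4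
    rw [Pi.mul_apply, Real.norm_eq_abs, abs_mul, abs_mul,
      abs_of_pos (inv_pos.mpr h4), abs_of_pos (Real.exp_pos _)]
    have hMX : |μ ω| * X ω ≤ M * Real.exp C :=
      mul_le_mul h1 h2 (Real.exp_pos _).le hM0
    exact mul_le_mul h3 hMX (by positivity) (Real.exp_pos _).le
  have hpull1 : (P[fun ω' => μ ω' * (X ω' / ν ω') | mG]) =ᵐ[P]
      fun ω => (ν ω)⁻¹ * (P[fun ω' => μ ω' * X ω' | mG]) ω := by
    have heq : (fun ω' => μ ω' * (X ω' / ν ω')) =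
        (fun ω => (ν ω)⁻¹) * fun ω => μ ω * X ω := by
      funext ω; simp [div_eq_mul_inv]; ring
    rw [heq]
    exact condExp_mul_of_stronglyMeasurable_left (hν_meas.inv.stronglyMeasurable) int_f1 int_μX
  -- pull-out 2
  have int_νμ : Integrable ((fun ω => ν ω) * μ) P := by
    refine (integrable_const (Real.exp C * M)).mono' (hν_asm.mul hμ_asm) ?_
    filter_upwards [hM, hν_ub] with ω h1 h2
    rw [Pi.mul_apply, Real.norm_eq_abs, abs_mul]
    exact mul_le_mul h2 h1 (abs_nonneg _) (Real.exp_pos _).le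
  have hpull2 : (P[(fun ω => ν ω) * μ | mG]) =ᵐ[P] (fun ω => ν ω) * P[μ | mG] :=
    condExp_mul_of_stronglyMeasurable_left hν_meas.stronglyMeasurable int_νμ int_μ
  -- CLM commuting
  have hS_clm : (P[Y | mG]) =ᵐ[P] fun ω => ⟪δ, ES ω⟫ := by
    have := condexp_clm_comm hG (innerSL ℝ δ) int_S
    simpa using this
  have hG2_clm : (P[fun ω => μ ω * ⟪δ, S ω - ES ω⟫ | mG]) =ᵐ[P] fun ω => ⟪δ, G2 ω⟫ := by
    have h := condexp_clm_comm hG (innerSL ℝ δ) int_μs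
    simp only [innerSL_apply_apply, real_inner_smul_right] at h
    exact h
  -- Z and its bounds
  set K : ℝ := (‖δ‖ * Ms) ^ 2 * Real.exp C with hK_def
  have hK0 : 0 ≤ K := by positivity
  set Z : Ω → ℝ := fun ω => X ω - 1 - Y ω with hZ_def
  have hZ_bdd : ∀ᵐ ω ∂P, |Z ω| ≤ K := by
    filter_upwards [hY_bdd, hY_C] with ω h1 h2
    calc |Z ω| ≤ (Y ω) ^ 2 * Real.exp |Y ω| := aux_exp2 (Y ω)
      _ ≤ (‖δ‖ * Ms) ^ 2 * Real.exp C := by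
          refine mul_le_mul ?_ (Real.exp_le_exp.mpr h2) (Real.exp_pos _).le (by positivity)
          calc (Y ω) ^ 2 = |Y ω| ^ 2 := (sq_abs _).symm
            _ ≤ (‖δ‖ * Ms) ^ 2 := by
                exact pow_le_pow_left₀ (abs_nonneg _) h1 2
  have int_Y : Integrable Y P := by
    refine (integrable_const C).mono' hY_asm ?_
    filter_upwards [hY_C] with ω h; rwa [Real.norm_eq_abs]
  have int_Z : Integrable Z P := (int_X.sub (integrable_const 1)).sub int_Y
  have hEZ_eq : (P[Z | mG]) =ᵐ[P] fun ω => ν ω - 1 - ⟪δ, ES ω⟫ := by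
    have h1 : (P[Z | mG]) =ᵐ[P] P[fun ω => X ω - 1 | mG] - P[Y | mG] :=
      condExp_sub (int_X.sub (integrable_const 1)) int_Y mG
    have h2 : (P[fun ω => X ω - 1 | mG]) =ᵐ[P] P[X | mG] - P[fun _ => (1:ℝ) | mG] :=
      condExp_sub int_X (integrable_const 1) mG
    have h3 : (P[fun _ => (1:ℝ) | mG]) = fun _ => (1:ℝ) := condExp_const hG 1
    filter_upwards [h1, h2, hS_clm] with ω hω1 hω2 hω3
    simp only [Pi.sub_apply] at hω1 hω2
    rw [hω1, hω2, h3, hω3, ← hνX]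
  have hEZ_bdd : ∀ᵐ ω ∂P, |(P[Z | mG]) ω| ≤ K := by
    have h : ∀ᵐ ω ∂P, |Z ω| ≤ (K.toNNReal : ℝ) := by
      filter_upwards [hZ_bdd] with ω hω; rwa [Real.coe_toNNReal _ hK0]
    have := ae_bdd_condExp_of_ae_bdd (m := mG) h
    filter_upwards [this] with ω hω; rwa [Real.coe_toNNReal _ hK0] at hω
  -- W
  set W : Ω → ℝ := fun ω => X ω - ν ω - ⟪δ, S ω - ES ω⟫ with hW_def
  have hW_bdd : ∀ᵐ ω ∂P, |W ω| ≤ 2 * K := by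
    filter_upwards [hZ_bdd, hEZ_bdd, hEZ_eq] with ω h1 h2 h3
    have : W ω = Z ω - (P[Z | mG]) ω := by
      rw [h3]
      simp only [hW_def, hZ_def, inner_sub_right]
      ring
    rw [this]
    calc |Z ω - (P[Z | mG]) ω| ≤ |Z ω| + |(P[Z | mG]) ω| := abs_sub _ _
      _ ≤ 2 * K := by linarith
  have int_μW : Integrable (fun ω => μ ω * W ω) P := by
    have hW_meas : AEStronglyMeasurable[mF] W P :=
      (hX_asm.sub hν_asm).sub (AEStronglyMeasurable.inner aestronglyMeasurable_const hSES_asm)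
    refine (integrable_const (M * (2 * K))).mono' (hμ_asm.mul hW_meas) ?_
    filter_upwards [hM, hW_bdd] with ω h1 h2
    rw [Real.norm_eq_abs, abs_mul]
    exact mul_le_mul h1 h2 (abs_nonneg _) hM0
  have hEμW_bdd : ∀ᵐ ω ∂P, |(P[fun ω => μ ω * W ω | mG]) ω| ≤ M * (2 * K) := by
    have hb : 0 ≤ M * (2 * K) := by positivity
    have h : ∀ᵐ ω ∂P, |μ ω * W ω| ≤ ((M * (2 * K)).toNNReal : ℝ) := by
      filter_upwards [hM, hW_bdd] with ω h1 h2
      rw [Real.coe_toNNReal _ hb, abs_mul]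
      exact mul_le_mul h1 h2 (abs_nonneg _) hM0
    have := ae_bdd_condExp_of_ae_bdd (m := mG) h
    filter_upwards [this] with ω hω; rwa [Real.coe_toNNReal _ hb] at hω
  -- decomposition of P[μX|mG]
  have int_inner : Integrable (fun ω => μ ω * ⟪δ, S ω - ES ω⟫) P := by
    refine (integrable_const (M * (‖δ‖ * (2 * Ms)))).mono'
      (hμ_asm.mul (AEStronglyMeasurable.inner aestronglyMeasurable_const hSES_asm)) ?_
    filter_upwards [hM, hS_bdd, hES_bdd] with ω h1 h2 h3
    rw [Real.norm_eq_abs, abs_mul]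
    have hin : |⟪δ, S ω - ES ω⟫| ≤ ‖δ‖ * (2 * Ms) := by
      calc |⟪δ, S ω - ES ω⟫| ≤ ‖δ‖ * ‖S ω - ES ω‖ := abs_real_inner_le_norm _ _
        _ ≤ ‖δ‖ * (2 * Ms) := by
            refine mul_le_mul_of_nonneg_left ?_ hδ0
            calc ‖S ω - ES ω‖ ≤ ‖S ω‖ + ‖ES ω‖ := norm_sub_le _ _
              _ ≤ 2 * Ms := by linarith
    exact mul_le_mul h1 hin (abs_nonneg _) hM0
  have heq' : (fun ω => μ ω * X ω) =
      (fun ω => ν ω) * μ + ((fun ω => μ ω * ⟪δ, S ω - ES ω⟫) + fun ω => μ ω * W ω) := by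
    funext ω
    simp only [Pi.add_apply, Pi.mul_apply, hW_def]
    ring
  have hdecomp : (P[fun ω => μ ω * X ω | mG]) =ᵐ[P]
      fun ω => ν ω * (P[μ | mG]) ω + ⟪δ, G2 ω⟫ + (P[fun ω => μ ω * W ω | mG]) ω := by
    rw [heq']
    have h1 := condExp_add (μ := P) (m := mG) int_νμ (int_inner.add int_μW)
    have h2 := condExp_add (μ := P) (m := mG) int_inner int_μW
    filter_upwards [h1, h2, hpull2, hG2_clm] with ω hω1 hω2 hω3 hω4
    simp only [Pi.add_apply] at hω1 hω2
    rw [hω1, hω2, hω4]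
    have h5 : (P[(fun ω => ν ω) * μ|mG]) ω = ν ω * (P[μ|mG]) ω := by
      rw [hω3]; simp
    rw [h5]; ring
  -- bound on |1 - ν|
  have hν1_bdd : ∀ᵐ ω ∂P, |ν ω - 1| ≤ ‖δ‖ * Ms * Real.exp C := by
    have hXb : ∀ᵐ ω ∂P, |X ω - 1| ≤ ((‖δ‖ * Ms * Real.exp C).toNNReal : ℝ) := by
      filter_upwards [hY_bdd, hY_C] with ω h1 h2
      rw [Real.coe_toNNReal _ (by positivity)]
      calc |X ω - 1| ≤ |Y ω| * Real.exp |Y ω| := aux_exp1 (Y ω)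
        _ ≤ ‖δ‖ * Ms * Real.exp C :=
            mul_le_mul h1 (Real.exp_le_exp.mpr h2) (Real.exp_pos _).le (by positivity)
    have h := ae_bdd_condExp_of_ae_bdd (m := mG) hXb
    have heq : (P[fun ω => X ω - 1 | mG]) =ᵐ[P] fun ω => ν ω - 1 := by
      have h2 : (P[fun ω => X ω - 1 | mG]) =ᵐ[P] P[X | mG] - P[fun _ => (1:ℝ) | mG] :=
        condExp_sub int_X (integrable_const 1) mG
      filter_upwards [h2] with ω hω
      simp only [Pi.sub_apply] at hω
      rw [hω, condExp_const hG, ← hνX]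
    filter_upwards [h, heq] with ω hω1 hω2
    rw [← hω2]
    rwa [Real.coe_toNNReal _ (by positivity)] at hω1
  -- final pointwise bound
  have habs : ∀ᵐ ω ∂P,
      ‖(P[fun ω' => μ ω' * (X ω' / ν ω') | mG]) ω - (P[μ | mG]) ω - ⟪δ, G2 ω⟫‖
        ≤ 4 * Real.exp (2 * C) * M * Ms ^ 2 * ‖δ‖ ^ 2 := by
    filter_upwards [hpull1, hdecomp, hν_pos', hνinv, hν1_bdd, hG2_bdd, hEμW_bdd]
      with ω h1 h2 h3 h4 h5 h6 h7
    rw [Real.norm_eq_abs, h1, h2]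
    have hνne : ν ω ≠ 0 := ne_of_gt h3
    have hexpr : (ν ω)⁻¹ * (ν ω * (P[μ | mG]) ω + ⟪δ, G2 ω⟫ + (P[fun ω => μ ω * W ω | mG]) ω)
        - (P[μ | mG]) ω - ⟪δ, G2 ω⟫
        = ((ν ω)⁻¹ - 1) * ⟪δ, G2 ω⟫ + (ν ω)⁻¹ * (P[fun ω => μ ω * W ω | mG]) ω := by
      field_simp
      ring
    rw [hexpr]
    have hT : |⟪δ, G2 ω⟫| ≤ ‖δ‖ * (M * (2 * Ms)) := by
      calc |⟪δ, G2 ω⟫| ≤ ‖δ‖ * ‖G2 ω‖ := abs_real_inner_le_norm _ _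
        _ ≤ ‖δ‖ * (M * (2 * Ms)) := mul_le_mul_of_nonneg_left h6 hδ0
    have hfac : |(ν ω)⁻¹ - 1| ≤ Real.exp C * (‖δ‖ * Ms * Real.exp C) := by
      have : (ν ω)⁻¹ - 1 = (ν ω)⁻¹ * (1 - ν ω) := by field_simp
      rw [this, abs_mul, abs_of_pos (inv_pos.mpr h3)]
      have h5' : |1 - ν ω| ≤ ‖δ‖ * Ms * Real.exp C := by rwa [abs_sub_comm] at h5
      exact mul_le_mul h4 h5' (abs_nonneg _) (Real.exp_pos _).le
    have hterm2 : |(ν ω)⁻¹ * (P[fun ω => μ ω * W ω | mG]) ω| ≤ Real.exp C * (M * (2 * K)) := by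
      rw [abs_mul, abs_of_pos (inv_pos.mpr h3)]
      exact mul_le_mul h4 h7 (abs_nonneg _) (Real.exp_pos _).le
    have hexp2 : Real.exp (2 * C) = Real.exp C * Real.exp C := by
      rw [two_mul, Real.exp_add]
    calc |((ν ω)⁻¹ - 1) * ⟪δ, G2 ω⟫ + (ν ω)⁻¹ * (P[fun ω => μ ω * W ω | mG]) ω|
        ≤ |((ν ω)⁻¹ - 1) * ⟪δ, G2 ω⟫| + |(ν ω)⁻¹ * (P[fun ω => μ ω * W ω | mG]) ω| :=
          abs_add_le _ _
      _ ≤ Real.exp C * (‖δ‖ * Ms * Real.exp C) * (‖δ‖ * (M * (2 * Ms)))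
            + Real.exp C * (M * (2 * K)) := by
          refine add_le_add ?_ hterm2
          rw [abs_mul]
          exact mul_le_mul hfac hT (abs_nonneg _) (by positivity)
      _ = 4 * Real.exp (2 * C) * M * Ms ^ 2 * ‖δ‖ ^ 2 := by
          rw [hexp2, hK_def]
          ring
  -- conclude
  have hfinal := eLpNorm_le_of_ae_bound (μ := P) (p := 2) habs
  simp only [measure_univ, ENNReal.one_rpow, one_mul] at hfinal
  exact hfinal
end

section
/- For all positive semidefinite real q×q matrices A and B: 2·tr(√(√A · B · √A)) ≤ tr(A) + tr(B). Equivalently, the covariance term tr(A + B − 2·(√A B √A)^{1/2}) appearing in the Gelbrich (squared Bures–Wasserstein) distance between two centered distributions with covariances A and B is nonnegative. -/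
/-!
Write `X = √B √A`, so that `S = √(√A B √A)` satisfies `S * S = Xᴴ * X`. With the
pseudo-inverse `S⁺` of `S` (the functional calculus of `x ↦ x⁻¹`, using `0⁻¹ = 0`), the
matrix `W = X S⁺` is a contraction with `Wᴴ X = S`, so `tr S = tr (Wᴴ √B √A)`. Expanding
`0 ≤ tr (Mᴴ M)` for `M = √B - √A Wᴴ` then gives
`2 tr S ≤ tr B + tr (√A Wᴴ W √A) ≤ tr B + tr A`.
-/

open Matrix

section
open scoped ComplexOrder
/-- The positive semidefinite square root of a positive semidefinite matrix
(the definition removed from Mathlib, restated verbatim). -/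
noncomputable def Matrix.PosSemidef.sqrt {n 𝕜 : Type*} [Fintype n] [RCLike 𝕜] [DecidableEq n]
    {A : Matrix n n 𝕜} (hA : A.PosSemidef) : Matrix n n 𝕜 :=
  hA.1.eigenvectorUnitary.1 * diagonal ((↑) ∘ (√·) ∘ hA.1.eigenvalues) *
  (star hA.1.eigenvectorUnitary : Matrix n n 𝕜)

end

open scoped MatrixOrder ComplexOrder

namespace Matrix

variable {n 𝕜 : Type*} [Fintype n] [DecidableEq n] [RCLike 𝕜]

lemma PosSemidef.sqrt_eq_cfc {A : Matrix n n 𝕜} (hA : A.PosSemidef) :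
    hA.sqrt = cfc Real.sqrt A := by
  rw [hA.1.cfc_eq]
  rfl

lemma PosSemidef.posSemidef_sqrt {A : Matrix n n 𝕜} (hA : A.PosSemidef) :
    hA.sqrt.PosSemidef := by
  rw [hA.sqrt_eq_cfc, ← nonneg_iff_posSemidef]
  exact cfc_nonneg fun x _ => Real.sqrt_nonneg x

lemma PosSemidef.sqrt_mul_self {A : Matrix n n 𝕜} (hA : A.PosSemidef) :
    hA.sqrt * hA.sqrt = A := by
  rw [hA.sqrt_eq_cfc, ← cfc_mul ..]
  conv_rhs => rw [← cfc_id' ℝ A]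
  refine cfc_congr fun x hx => Real.mul_self_sqrt ?_
  exact spectrum_nonneg_of_nonneg hA.nonneg hx

lemma PosSemidef.exists_contraction_conjTranspose_mul_eq {S X : Matrix n n 𝕜}
    (hS : S.PosSemidef) (hSX : S * S = Xᴴ * X) :
    ∃ W : Matrix n n 𝕜, Wᴴ * W ≤ 1 ∧ Wᴴ * X = S := by
  have hcont (f : ℝ → ℝ) : ContinuousOn f (spectrum ℝ S) :=
    S.finite_real_spectrum.continuousOn f
  set pinv := cfc (·⁻¹ : ℝ → ℝ) S
  have hpinv : pinvᴴ = pinv := (cfc_predicate _ S : IsSelfAdjoint pinv)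
  have hWX : (X * pinv)ᴴ * X = S := by
    rw [conjTranspose_mul, hpinv, Matrix.mul_assoc, ← hSX, ← Matrix.mul_assoc]
    conv_lhs => rw [← cfc_id' ℝ S]
    rw [← cfc_mul (hf := hcont _) (hg := hcont _), ← cfc_mul (hf := hcont _) (hg := hcont _)]
    simp only [inv_mul_mul_self]
    exact cfc_id' ℝ S
  refine ⟨X * pinv, ?_, hWX⟩
  rw [← Matrix.mul_assoc, hWX]
  conv_lhs => rw [← cfc_id' ℝ S]
  rw [← cfc_mul (hf := hcont _) (hg := hcont _)]
  exact cfc_le_one _ _ fun x _ => by by_cases hx : x = 0 <;> simp [hx]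

lemma two_mul_trace_le_of_mul_self_eq {S Y Z : Matrix n n 𝕜} (hS : S.PosSemidef)
    (hSYZ : S * S = (Y * Z)ᴴ * (Y * Z)) :
    2 * S.trace ≤ (Y * Yᴴ).trace + (Zᴴ * Z).trace := by
  obtain ⟨W, hW, hWYZ⟩ := hS.exists_contraction_conjTranspose_mul_eq hSYZ
  have hsq : 0 ≤ ((Y - W * Zᴴ) * (Yᴴ - Z * Wᴴ)).trace := by
    simpa using (posSemidef_conjTranspose_mul_self (Yᴴ - Z * Wᴴ)).trace_nonneg
  have hcross : (Y * (Z * Wᴴ)).trace = S.trace := by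
    rw [← Matrix.mul_assoc, trace_mul_comm, hWYZ]
  have hcross_conj : (W * Zᴴ * Yᴴ).trace = S.trace := by
    rw [← conjTranspose_conjTranspose W, ← conjTranspose_mul, ← conjTranspose_mul,
      trace_conjTranspose, hcross, ← trace_conjTranspose, hS.1.eq]
  have hcontract : (W * Zᴴ * (Z * Wᴴ)).trace ≤ (Zᴴ * Z).trace := by
    have := OrderHomClass.mono (tracePositiveLinearMap n ℝ 𝕜)
      (star_left_conjugate_le_conjugate hW Zᴴ)
    simp only [tracePositiveLinearMap_apply, star_eq_conjTranspose, conjTranspose_conjTranspose,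
      Matrix.mul_one] at this
    rwa [trace_mul_cycle, trace_mul_comm Zᴴ Z, Matrix.mul_assoc Z Wᴴ W]
  rw [sub_mul, mul_sub, mul_sub, trace_sub, trace_sub, trace_sub, hcross, hcross_conj] at hsq
  linear_combination hsq + hcontract

end Matrix

/-- Nonnegativity of the Gelbrich/Bures–Wasserstein covariance term: for all
positive semidefinite real `q×q` matrices `A` and `B`,
`2·tr(√(√A·B·√A)) ≤ tr(A) + tr(B)`. -/
theorem two_trace_sqrt_le_trace_add_trace
    {q : ℕ} (A B : Matrix (Fin q) (Fin q) ℝ)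
    (hA : A.PosSemidef) (hB : B.PosSemidef)
    (hC : (hA.sqrt * B * hA.sqrt).PosSemidef) :
    2 * (hC.sqrt).trace ≤ A.trace + B.trace := by
  have hsqrtA : hA.sqrtᴴ = hA.sqrt := hA.posSemidef_sqrt.1
  have hsqrtB : hB.sqrtᴴ = hB.sqrt := hB.posSemidef_sqrt.1
  have hC_eq : hC.sqrt * hC.sqrt = (hB.sqrt * hA.sqrt)ᴴ * (hB.sqrt * hA.sqrt) := by
    rw [hC.sqrt_mul_self, conjTranspose_mul, hsqrtA, hsqrtB]
    conv_lhs => rw [← hB.sqrt_mul_self]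
    simp only [Matrix.mul_assoc]
  have key := two_mul_trace_le_of_mul_self_eq hC.posSemidef_sqrt hC_eq
  rwa [hsqrtA, hsqrtB, hA.sqrt_mul_self, hB.sqrt_mul_self, add_comm] at key
end

section
/- For every measurable f̂ : 𝒳 × 𝒲 → [0, ∞) (with ν̂(x) finite for P_X-a.e. x), the truncated density-ratio estimator satisfies the Lipschitz stability bound ‖r̂ − r‖_{L²(P)} ≤ C₁·‖f̂ − f‖_{L²(P)} with explicit constant C₁ := 2·e^{4τ}·|𝒲|^{1/2}·f_min^{−1/2}. -/
/-!
For fixed `x` the weight `exp ⟪δ, s⟫` lies in `[e^{-τ}, e^{τ}]`, hence so does `ν(x)`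
(as `∫_𝒲 f = 1`), which therefore lies inside the truncation window. Truncation being
`1`-Lipschitz, `|r̂ - r| ≤ 2 e^{3τ} |ν̂ - ν| ≤ 2 e^{4τ} ∫_𝒲 |f̂ - f|`, so the fibre
`∫_𝒲 f |r̂ - r|²` of `‖r̂ - r‖²_{L²(P)}` is at most `4 e^{8τ} (∫_𝒲 |f̂ - f|)²`. Cauchy–Schwarz
on `𝒲` and `f ≥ f_min` bound this by `C₁² ∫_𝒲 f |f̂ - f|²`; integrate over `x`.
-/

open MeasureTheory Real Set
open scoped RealInnerProductSpace ENNReal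

theorem abs_clamp_sub_le {α : Type*} [AddCommGroup α] [LinearOrder α] [IsOrderedAddMonoid α]
    {lo hi c : α} (a : α) (hlo : lo ≤ c) (hhi : c ≤ hi) :
    |min (max a lo) hi - c| ≤ |a - c| :=
  calc |min (max a lo) hi - c| = |min (max a lo) hi - min (max c lo) hi| := by
        rw [max_eq_left hlo, min_eq_left hhi]
    _ ≤ |max a lo - max c lo| := by
        simpa using abs_min_sub_min_le_max (max a lo) hi (max c lo) hi
    _ ≤ |a - c| := abs_max_sub_max_le_abs a c lo

theorem abs_div_sub_div_le {e a b E m n : ℝ} (he : |e| ≤ E) (hm : 0 < m) (hma : m ≤ a)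
    (hn : 0 < n) (hnb : n ≤ b) : |e / a - e / b| ≤ E * |a - b| / (m * n) := by
  have ha := hm.trans_le hma
  have hb := hn.trans_le hnb
  have hE : 0 ≤ E := (abs_nonneg e).trans he
  rw [div_sub_div _ _ ha.ne' hb.ne', show e * b - a * e = e * (b - a) by ring, abs_div, abs_mul,
    abs_sub_comm b, abs_of_pos (mul_pos ha hb)]
  gcongr

theorem abs_div_clamp_sub_div_le {e ν νhat τ : ℝ} (he : |e| ≤ exp τ)
    (hν : ν ∈ Icc (exp (-τ)) (exp τ)) :
    |e / min (max νhat (exp (-τ) / 2)) (2 * exp τ) - e / ν| ≤ 2 * exp (3 * τ) * |νhat - ν| := by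
  have hlo : exp (-τ) / 2 ≤ ν := by linarith [exp_pos (-τ), hν.1]
  have hhi : ν ≤ 2 * exp τ := by linarith [exp_pos τ, hν.2]
  calc |e / min (max νhat (exp (-τ) / 2)) (2 * exp τ) - e / ν|
      ≤ exp τ * |min (max νhat (exp (-τ) / 2)) (2 * exp τ) - ν| / (exp (-τ) / 2 * exp (-τ)) :=
        abs_div_sub_div_le he (by positivity) (le_min (le_max_right _ _) (hlo.trans hhi))
          (exp_pos _) hν.1
    _ ≤ exp τ * |νhat - ν| / (exp (-τ) / 2 * exp (-τ)) := by
        gcongr exp τ * ?_ / _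
        exact abs_clamp_sub_le νhat hlo hhi
    _ = 2 * exp (3 * τ) * |νhat - ν| := by
        rw [show 3 * τ = τ + τ + τ by ring, exp_add, exp_add, exp_neg]
        field_simp

theorem exp_inner_mem_Icc {E : Type*} [NormedAddCommGroup E] [InnerProductSpace ℝ E] {δ v : E}
    {Δ M : ℝ} (hδ : ‖δ‖ ≤ Δ) (hv : ‖v‖ ≤ M) : exp ⟪δ, v⟫ ∈ Icc (exp (-(Δ * M))) (exp (Δ * M)) := by
  have h : |⟪δ, v⟫| ≤ Δ * M := (abs_real_inner_le_norm δ v).trans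
    (mul_le_mul hδ hv (norm_nonneg _) ((norm_nonneg _).trans hδ))
  exact ⟨exp_le_exp.2 (neg_le_of_abs_le h), exp_le_exp.2 (le_of_abs_le h)⟩

section

variable {α : Type*} [MeasurableSpace α] {μ : Measure α}

theorem sq_eLpNorm_two (u : α → ℝ) : eLpNorm u 2 μ ^ 2 = ∫⁻ a, ‖u a‖ₑ ^ 2 ∂μ := by
  simpa using eLpNorm_nnreal_pow_eq_lintegral (f := u) (μ := μ) (p := 2) two_ne_zero

theorem eLpNorm_two_le_mul_of_lintegral_sq_le {u v : α → ℝ} {c : ℝ≥0∞}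
    (h : ∫⁻ a, ‖u a‖ₑ ^ 2 ∂μ ≤ c ^ 2 * ∫⁻ a, ‖v a‖ₑ ^ 2 ∂μ) :
    eLpNorm u 2 μ ≤ c * eLpNorm v 2 μ := by
  rw [← sq_eLpNorm_two, ← sq_eLpNorm_two, ← mul_pow] at h
  exact (ENNReal.pow_le_pow_left_iff two_ne_zero).1 h

theorem sq_lintegral_enorm_le_measure_univ_mul {u : α → ℝ} (hu : AEStronglyMeasurable u μ) :
    (∫⁻ a, ‖u a‖ₑ ∂μ) ^ 2 ≤ μ univ * ∫⁻ a, ‖u a‖ₑ ^ 2 ∂μ := by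
  have h := eLpNorm_le_eLpNorm_mul_rpow_measure_univ (p := 1) (q := 2) one_le_two hu
  rw [eLpNorm_one_eq_lintegral_enorm] at h
  calc (∫⁻ a, ‖u a‖ₑ ∂μ) ^ 2
      ≤ (eLpNorm u 2 μ * μ univ ^ (1 / (1 : ℝ≥0∞).toReal - 1 / (2 : ℝ≥0∞).toReal)) ^ 2 := by
        gcongr
    _ = μ univ * ∫⁻ a, ‖u a‖ₑ ^ 2 ∂μ := by
        rw [mul_pow, sq_eLpNorm_two, ← ENNReal.rpow_natCast, ← ENNReal.rpow_mul]
        norm_num [mul_comm]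

theorem lintegral_le_ofReal_inv_mul_lintegral {g : α → ℝ} {h : α → ℝ≥0∞} {m : ℝ} (hm : 0 < m)
    (hg : ∀ᵐ a ∂μ, m ≤ g a) :
    ∫⁻ a, h a ∂μ ≤ ENNReal.ofReal m⁻¹ * ∫⁻ a, ENNReal.ofReal (g a) * h a ∂μ := by
  rw [← lintegral_const_mul' _ _ ENNReal.ofReal_ne_top]
  refine lintegral_mono_ae (hg.mono fun a ha => ?_)
  have h1 : 1 ≤ ENNReal.ofReal m⁻¹ * ENNReal.ofReal (g a) := by
    rw [← ENNReal.ofReal_mul (by positivity), ← ENNReal.ofReal_one]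
    exact ENNReal.ofReal_le_ofReal ((one_le_inv_mul₀ hm).2 ha)
  exact (le_mul_of_one_le_left' h1).trans_eq (mul_assoc _ _ _)

theorem integral_mul_mem_Icc_of_integral_eq_one {e f : α → ℝ} {a b : ℝ}
    (he : ∀ x, e x ∈ Icc a b) (he_meas : AEStronglyMeasurable e μ) (hf0 : 0 ≤ᵐ[μ] f)
    (hf : ∫ x, f x ∂μ = 1) : ∫ x, e x * f x ∂μ ∈ Icc a b := by
  have hf_int : Integrable f μ := Integrable.of_integral_ne_zero (by rw [hf]; exact one_ne_zero)
  have hef : Integrable (fun x => e x * f x) μ :=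
    hf_int.bdd_mul he_meas (ae_of_all _ fun x => abs_le_max_abs_abs (he x).1 (he x).2)
  constructor
  · calc a = ∫ x, a * f x ∂μ := by rw [integral_const_mul, hf, mul_one]
      _ ≤ ∫ x, e x * f x ∂μ := integral_mono_ae (hf_int.const_mul a) hef
          (hf0.mono fun x hx => mul_le_mul_of_nonneg_right (he x).1 hx)
  · calc ∫ x, e x * f x ∂μ ≤ ∫ x, b * f x ∂μ := integral_mono_ae hef (hf_int.const_mul b)
          (hf0.mono fun x hx => mul_le_mul_of_nonneg_right (he x).2 hx)
      _ = b := by rw [integral_const_mul, hf, mul_one]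

theorem enorm_integral_mul_sub_integral_mul_le {e u v : α → ℝ} {K : ℝ}
    (heu : Integrable (fun x => e x * u x) μ) (hev : Integrable (fun x => e x * v x) μ)
    (he : ∀ x, |e x| ≤ K) :
    ‖∫ x, e x * u x ∂μ - ∫ x, e x * v x ∂μ‖ₑ ≤ ENNReal.ofReal K * ∫⁻ x, ‖u x - v x‖ₑ ∂μ := by
  rw [← integral_sub heu hev, ← lintegral_const_mul' _ _ ENNReal.ofReal_ne_top]
  refine (enorm_integral_le_lintegral_enorm _).trans (lintegral_mono fun x => ?_)
  rw [← mul_sub, enorm_mul, Real.enorm_eq_ofReal_abs (e x)]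
  gcongr
  exact he x

theorem lintegral_density_mul_sq_truncated_div_sub_div_le {e f : α → ℝ} {ν νhat τ : ℝ}
    (he : ∀ x, |e x| ≤ exp τ) (hν : ν ∈ Icc (exp (-τ)) (exp τ))
    (hf_meas : AEStronglyMeasurable f μ) (hf0 : 0 ≤ᵐ[μ] f) (hf : ∫ x, f x ∂μ = 1) :
    ∫⁻ x, ENNReal.ofReal (f x)
        * ‖e x / min (max νhat (exp (-τ) / 2)) (2 * exp τ) - e x / ν‖ₑ ^ 2 ∂μ
      ≤ ENNReal.ofReal (2 * exp (3 * τ) * |νhat - ν|) ^ 2 := by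
  have hf_int : Integrable f μ := Integrable.of_integral_ne_zero (by rw [hf]; exact one_ne_zero)
  have hf_lint : ∫⁻ x, ENNReal.ofReal (f x) ∂μ = 1 := by
    rw [← ofReal_integral_eq_lintegral_ofReal hf_int hf0, hf, ENNReal.ofReal_one]
  calc _ ≤ ∫⁻ x, ENNReal.ofReal (f x)
          * ENNReal.ofReal (2 * exp (3 * τ) * |νhat - ν|) ^ 2 ∂μ := by
        gcongr with x
        rw [Real.enorm_eq_ofReal_abs]
        exact ENNReal.ofReal_le_ofReal (abs_div_clamp_sub_div_le (he x) hν)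
    _ = ENNReal.ofReal (2 * exp (3 * τ) * |νhat - ν|) ^ 2 := by
        rw [lintegral_mul_const'' _ hf_meas.aemeasurable.ennreal_ofReal, hf_lint, one_mul]

theorem lintegral_density_mul_sq_truncated_ratio_sub_le [IsFiniteMeasure μ]
    {e f fhat : α → ℝ} {τ m : ℝ} (he : ∀ x, e x ∈ Icc (exp (-τ)) (exp τ))
    (he_meas : AEStronglyMeasurable e μ) (hf_meas : AEStronglyMeasurable f μ)
    (hfhat_meas : AEStronglyMeasurable fhat μ) (hm : 0 < m) (hfm : ∀ᵐ x ∂μ, m ≤ f x)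
    (hf : ∫ x, f x ∂μ = 1) (hefhat : Integrable (fun x => e x * fhat x) μ) :
    ∫⁻ x, ENNReal.ofReal (f x) * ‖e x / min (max (∫ y, e y * fhat y ∂μ) (exp (-τ) / 2))
        (2 * exp τ) - e x / ∫ y, e y * f y ∂μ‖ₑ ^ 2 ∂μ
      ≤ ENNReal.ofReal (2 * exp (4 * τ) * √(μ univ).toReal / √m) ^ 2
        * ∫⁻ x, ENNReal.ofReal (f x) * ‖fhat x - f x‖ₑ ^ 2 ∂μ := by
  have he_abs : ∀ x, |e x| ≤ exp τ := fun x =>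
    abs_le.2 ⟨by linarith [exp_pos (-τ), exp_pos τ, (he x).1], (he x).2⟩
  have hf0 : 0 ≤ᵐ[μ] f := hfm.mono fun x hx => hm.le.trans hx
  have hef : Integrable (fun x => e x * f x) μ :=
    (Integrable.of_integral_ne_zero (by rw [hf]; exact one_ne_zero)).bdd_mul he_meas
      (ae_of_all _ he_abs)
  have hdiff : ‖∫ y, e y * fhat y ∂μ - ∫ y, e y * f y ∂μ‖ₑ
      ≤ ENNReal.ofReal (exp τ) * ∫⁻ x, ‖fhat x - f x‖ₑ ∂μ :=
    enorm_integral_mul_sub_integral_mul_le hefhat hef he_abs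
  have hCS : (∫⁻ x, ‖fhat x - f x‖ₑ ∂μ) ^ 2
      ≤ μ univ * (ENNReal.ofReal m⁻¹ * ∫⁻ x, ENNReal.ofReal (f x) * ‖fhat x - f x‖ₑ ^ 2 ∂μ) :=
    (sq_lintegral_enorm_le_measure_univ_mul (hfhat_meas.sub hf_meas)).trans
      (by gcongr; exact lintegral_le_ofReal_inv_mul_lintegral hm hfm)
  set t := (μ univ).toReal
  have hμ : μ univ = ENNReal.ofReal t := (ENNReal.ofReal_toReal (measure_ne_top μ univ)).symm
  have hC : (2 * exp (3 * τ) * exp τ) ^ 2 * t * m⁻¹ = (2 * exp (4 * τ) * √t / √m) ^ 2 := by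
    rw [div_pow, mul_pow _ √t, sq_sqrt ENNReal.toReal_nonneg, sq_sqrt hm.le,
      show 4 * τ = 3 * τ + τ by ring, exp_add]
    ring
  calc _ ≤ ENNReal.ofReal (2 * exp (3 * τ)
          * |∫ y, e y * fhat y ∂μ - ∫ y, e y * f y ∂μ|) ^ 2 :=
        lintegral_density_mul_sq_truncated_div_sub_div_le he_abs
          (integral_mul_mem_Icc_of_integral_eq_one he he_meas hf0 hf) hf_meas hf0 hf
    _ ≤ (ENNReal.ofReal (2 * exp (3 * τ)) * (ENNReal.ofReal (exp τ)
          * ∫⁻ x, ‖fhat x - f x‖ₑ ∂μ)) ^ 2 := by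
        rw [ENNReal.ofReal_mul (by positivity), ← Real.enorm_eq_ofReal_abs]
        gcongr
    _ = ENNReal.ofReal (2 * exp (3 * τ) * exp τ) ^ 2 * (∫⁻ x, ‖fhat x - f x‖ₑ ∂μ) ^ 2 := by
        rw [ENNReal.ofReal_mul (p := 2 * exp (3 * τ)) (by positivity)]
        ring
    _ ≤ ENNReal.ofReal (2 * exp (3 * τ) * exp τ) ^ 2 * (μ univ * (ENNReal.ofReal m⁻¹
          * ∫⁻ x, ENNReal.ofReal (f x) * ‖fhat x - f x‖ₑ ^ 2 ∂μ)) := by gcongr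
    _ = _ := by
        rw [hμ, ← mul_assoc, ← mul_assoc, ← ENNReal.ofReal_pow (by positivity),
          ← ENNReal.ofReal_pow (by positivity), ← ENNReal.ofReal_mul (by positivity),
          ← ENNReal.ofReal_mul (by positivity), hC]

end

theorem lintegral_withDensity_prod_le_mul {X Y : Type*} [MeasurableSpace X] [MeasurableSpace Y]
    {μ : Measure X} {ν : Measure Y} [SFinite ν] {g F G : X × Y → ℝ≥0∞} {c : ℝ≥0∞}
    (hg : Measurable g) (hF : Measurable F) (hG : Measurable G)
    (h : ∀ᵐ x ∂μ, ∫⁻ y, g (x, y) * F (x, y) ∂ν ≤ c * ∫⁻ y, g (x, y) * G (x, y) ∂ν) :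
    ∫⁻ p, F p ∂(μ.prod ν).withDensity g ≤ c * ∫⁻ p, G p ∂(μ.prod ν).withDensity g := by
  rw [lintegral_withDensity_eq_lintegral_mul _ hg hF,
    lintegral_withDensity_eq_lintegral_mul _ hg hG, lintegral_prod _ (hg.mul hF).aemeasurable,
    lintegral_prod _ (hg.mul hG).aemeasurable,
    ← lintegral_const_mul _ (hg.mul hG).lintegral_prod_right']
  exact lintegral_mono_ae h

theorem truncated_density_ratio_lipschitz_stability_general
    {X : Type*} [MeasurableSpace X] (PX : Measure X)
    {q : ℕ} (Wset : Set (EuclideanSpace ℝ (Fin q)))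
    (hWmeas : MeasurableSet Wset) (hWvol : MeasureTheory.volume Wset < ⊤)
    (f : X × EuclideanSpace ℝ (Fin q) → ℝ) (hf_meas : Measurable f)
    (fmin fmax : ℝ) (hfmin : 0 < fmin)
    (hf_bdd : ∀ x w, w ∈ Wset → fmin ≤ f (x, w) ∧ f (x, w) ≤ fmax)
    (hf_int : ∀ᵐ x ∂PX, ∫ w in Wset, f (x, w) = 1)
    (s : X × EuclideanSpace ℝ (Fin q) → EuclideanSpace ℝ (Fin q))
    (hs_meas : Measurable s) (Ms : ℝ) (hs_bdd : ∀ p, ‖s p‖ ≤ Ms)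
    (δ : EuclideanSpace ℝ (Fin q)) (Δ : ℝ) (hδ : ‖δ‖ ≤ Δ)
    (fhat : X × EuclideanSpace ℝ (Fin q) → ℝ)
    (hfhat_meas : Measurable fhat)
    (hνhat_fin : ∀ᵐ x ∂PX,
      IntegrableOn (fun w => Real.exp ⟪δ, s (x, w)⟫ * fhat (x, w)) Wset) :
    ∀ (Pm : Measure (X × EuclideanSpace ℝ (Fin q))),
      Pm = (PX.prod (MeasureTheory.volume.restrict Wset)).withDensity
            (fun p => ENNReal.ofReal (f p)) →
    ∀ ν νhat νdag : X → ℝ,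
      (∀ x, ν x = ∫ w in Wset, Real.exp ⟪δ, s (x, w)⟫ * f (x, w)) →
      (∀ x, νhat x = ∫ w in Wset, Real.exp ⟪δ, s (x, w)⟫ * fhat (x, w)) →
      (∀ x, νdag x = min (max (νhat x) (Real.exp (-(Δ * Ms)) / 2))
          (2 * Real.exp (Δ * Ms))) →
      eLpNorm (fun p => Real.exp ⟪δ, s p⟫ / νdag p.1
          - Real.exp ⟪δ, s p⟫ / ν p.1) 2 Pm
        ≤ ENNReal.ofReal (2 * Real.exp (4 * (Δ * Ms))
            * Real.sqrt (MeasureTheory.volume Wset).toReal / Real.sqrt fmin)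
          * eLpNorm (fun p => fhat p - f p) 2 Pm := by
  intro Pm hPm ν νhat νdag hν hνhat hνdag
  subst hPm
  obtain rfl : ν = _ := funext hν
  obtain rfl : νhat = _ := funext hνhat
  obtain rfl : νdag = _ := funext hνdag
  beta_reduce
  have : IsFiniteMeasure (volume.restrict Wset) := isFiniteMeasure_restrict.2 hWvol.ne
  have he_meas : Measurable fun p => exp ⟪δ, s p⟫ := by fun_prop
  have hint_meas : ∀ g : X × EuclideanSpace ℝ (Fin q) → ℝ, Measurable g →
      Measurable fun x => ∫ w in Wset, exp ⟪δ, s (x, w)⟫ * g (x, w) := fun g hg =>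
    ((he_meas.mul hg).stronglyMeasurable.integral_prod_right').measurable
  have hν_meas := hint_meas f hf_meas
  have hνhat_meas := hint_meas fhat hfhat_meas
  refine eLpNorm_two_le_mul_of_lintegral_sq_le
    (lintegral_withDensity_prod_le_mul hf_meas.ennreal_ofReal
      (((he_meas.div (((hνhat_meas.max measurable_const).min measurable_const).comp
        measurable_fst)).sub (he_meas.div (hν_meas.comp measurable_fst))).enorm.pow_const 2)
      (by fun_prop) ?_)
  filter_upwards [hf_int, hνhat_fin] with x hx1 hx2
  have := lintegral_density_mul_sq_truncated_ratio_sub_le (μ := volume.restrict Wset)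
    (e := fun w => exp ⟪δ, s (x, w)⟫) (f := fun w => f (x, w)) (fhat := fun w => fhat (x, w))
    (fun w => exp_inner_mem_Icc hδ (hs_bdd (x, w)))
    (he_meas.comp measurable_prodMk_left).aestronglyMeasurable
    (hf_meas.comp measurable_prodMk_left).aestronglyMeasurable
    (hfhat_meas.comp measurable_prodMk_left).aestronglyMeasurable
    hfmin (ae_restrict_of_forall_mem hWmeas fun w hw => (hf_bdd x w hw).1) hx1 hx2
  rwa [Measure.restrict_apply_univ] at this

/-- Lipschitz stability of the truncated density-ratio estimator: with
`ν(x) = ∫_𝒲 exp⟨δ,s(x,w)⟩ f(x,w) dw`, `ν̂(x) = ∫_𝒲 exp⟨δ,s(x,w)⟩ f̂(x,w) dw`,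
truncation `ν̂† = min(max(ν̂, e^{−τ}/2), 2e^{τ})` for `τ = Δ·M_s`, and density
ratios `r = exp⟨δ,s⟩/ν`, `r̂ = exp⟨δ,s⟩/ν̂†`, one has
`‖r̂ − r‖_{L²(P)} ≤ C₁·‖f̂ − f‖_{L²(P)}` with
`C₁ = 2·e^{4τ}·|𝒲|^{1/2}·f_min^{−1/2}`, where `P` has density `f` with
respect to `P_X ⊗ Lebesgue` on `𝒳 × 𝒲`. -/
theorem truncated_density_ratio_lipschitz_stability
    {X : Type*} [MeasurableSpace X] (PX : Measure X) [IsProbabilityMeasure PX]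
    {q : ℕ} (Wset : Set (EuclideanSpace ℝ (Fin q)))
    (hWmeas : MeasurableSet Wset) (hWvol : MeasureTheory.volume Wset < ⊤)
    (f : X × EuclideanSpace ℝ (Fin q) → ℝ) (hf_meas : Measurable f)
    (fmin fmax : ℝ) (hfmin : 0 < fmin)
    (hf_bdd : ∀ x w, w ∈ Wset → fmin ≤ f (x, w) ∧ f (x, w) ≤ fmax)
    (hf_int : ∀ᵐ x ∂PX, ∫ w in Wset, f (x, w) = 1)
    (s : X × EuclideanSpace ℝ (Fin q) → EuclideanSpace ℝ (Fin q))
    (hs_meas : Measurable s) (Ms : ℝ) (hs_bdd : ∀ p, ‖s p‖ ≤ Ms)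
    (δ : EuclideanSpace ℝ (Fin q)) (Δ : ℝ) (hδ : ‖δ‖ ≤ Δ)
    (fhat : X × EuclideanSpace ℝ (Fin q) → ℝ)
    (hfhat_meas : Measurable fhat) (hfhat_nonneg : ∀ p, 0 ≤ fhat p)
    (hνhat_fin : ∀ᵐ x ∂PX,
      IntegrableOn (fun w => Real.exp ⟪δ, s (x, w)⟫ * fhat (x, w)) Wset) :
    ∀ (Pm : Measure (X × EuclideanSpace ℝ (Fin q))),
      Pm = (PX.prod (MeasureTheory.volume.restrict Wset)).withDensity
            (fun p => ENNReal.ofReal (f p)) →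
    ∀ ν νhat νdag : X → ℝ,
      (∀ x, ν x = ∫ w in Wset, Real.exp ⟪δ, s (x, w)⟫ * f (x, w)) →
      (∀ x, νhat x = ∫ w in Wset, Real.exp ⟪δ, s (x, w)⟫ * fhat (x, w)) →
      (∀ x, νdag x = min (max (νhat x) (Real.exp (-(Δ * Ms)) / 2))
          (2 * Real.exp (Δ * Ms))) →
      eLpNorm (fun p => Real.exp ⟪δ, s p⟫ / νdag p.1
          - Real.exp ⟪δ, s p⟫ / ν p.1) 2 Pm
        ≤ ENNReal.ofReal (2 * Real.exp (4 * (Δ * Ms))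
            * Real.sqrt (MeasureTheory.volume Wset).toReal / Real.sqrt fmin)
          * eLpNorm (fun p => fhat p - f p) 2 Pm :=
  truncated_density_ratio_lipschitz_stability_general PX Wset hWmeas hWvol f hf_meas fmin fmax hfmin
    hf_bdd hf_int s hs_meas Ms hs_bdd δ Δ hδ fhat hfhat_meas hνhat_fin
end

section
/- Let μ : 𝒳 × 𝒲 → ℝ be measurable with |μ| ≤ M for a constant M < ∞, fix F < ∞, and define η(x) := ∫_𝒲 exp⟨δ, s(x, w)⟩·μ(x, w)·f(x, w) dw and m(x) := η(x)/ν(x). Then there exists a finite constant C₂, depending only on (τ, M, F, f_min, f_max, |𝒲|), such that for every measurable μ̂ : 𝒳 × 𝒲 → ℝ with |μ̂| ≤ M and every measurable f̂ : 𝒳 × 𝒲 → [0, F], setting η̂(x) := ∫_𝒲 exp⟨δ, s(x, w)⟩·μ̂(x, w)·f̂(x, w) dw and m̂(x) := η̂(x)/ν̂†(x), one has the Lipschitz stability bound ‖m̂ − m‖_{L²(P)} ≤ C₂·(‖μ̂ − μ‖_{L²(P)} + ‖f̂ − f‖_{L²(P)}). -/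
/-!
Since `e^{-τ} ≤ exp ⟪δ, s⟫ ≤ e^τ` and `f (x, ·)` is a probability density on `𝒲`, the true
denominator `ν x` lies in `[e^{-τ}, e^τ]`. The truncation keeps `ν̂† x ≥ e^{-τ} / 2` and, being the
projection onto an interval that contains `ν x`, does not increase the distance to `ν x`. Writing
`m̂ - m = (η̂ - η) / ν̂† + η (ν - ν̂†) / (ν̂† ν)` then bounds `|m̂ x - m x|` by a constant times
`∫_𝒲 (|μ̂ - μ| + |f̂ - f|) dw`. This average over `w` is controlled in `L²(P)` by Cauchy–Schwarz on
the finite measure space `𝒲`, because `f_min ≤ f ≤ f_max` makes `L²(P)` and `L²(P_X ⊗ dw)`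
equivalent norms.
-/

open MeasureTheory Real
open scoped RealInnerProductSpace ENNReal

lemma abs_min_max_sub_le {a lo hi c : ℝ} (hlo : lo ≤ c) (hhi : c ≤ hi) :
    |min (max a lo) hi - c| ≤ |a - c| := by
  calc |min (max a lo) hi - c| = |min (max a lo) hi - min (max c lo) hi| := by
        rw [max_eq_left hlo, min_eq_left hhi]
    _ ≤ max |max a lo - max c lo| |hi - hi| := abs_min_sub_min_le_max _ _ _ _
    _ = |max a lo - max c lo| := by simp
    _ ≤ |a - c| := abs_max_sub_max_le_abs _ _ _

lemma abs_div_sub_div_le_s18 (a c : ℝ) {b d : ℝ} (hb : 0 < b) (hd : 0 < d) :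
    |a / b - c / d| ≤ |a - c| / b + |c| * |d - b| / (b * d) := by
  have h : a / b - c / d = (a - c) / b + c * (d - b) / (b * d) := by
    field_simp; ring
  rw [h]
  refine (abs_add_le _ _).trans_eq ?_
  rw [abs_div, abs_div, abs_mul, abs_of_pos hb, abs_of_pos (mul_pos hb hd)]

lemma abs_div_min_max_sub_div_le {τ K M N N' H H' I : ℝ} (hN : N ∈ Set.Icc (exp (-τ)) (exp τ))
    (hH : |H| ≤ exp τ * M) (hN' : |N' - N| ≤ exp τ * I) (hH' : |H' - H| ≤ exp τ * (K * I)) :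
    |H' / min (max N' (exp (-τ) / 2)) (2 * exp τ) - H / N|
      ≤ (2 * exp τ ^ 2 * K + 2 * exp τ ^ 4 * M) * I := by
  set Nc := min (max N' (exp (-τ) / 2)) (2 * exp τ)
  have hlo : exp (-τ) / 2 ≤ Nc := by
    refine le_min (le_max_right _ _) ?_
    linarith [exp_pos (-τ), hN.1, hN.2]
  have hNc : |N - Nc| ≤ exp τ * I := by
    rw [abs_sub_comm]
    refine (abs_min_max_sub_le ?_ ?_).trans hN'
    · linarith [exp_pos (-τ), hN.1]
    · linarith [exp_pos τ, hN.2]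
  have hM : 0 ≤ M := nonneg_of_mul_nonneg_right ((abs_nonneg _).trans hH) (exp_pos τ)
  have hI : 0 ≤ I := nonneg_of_mul_nonneg_right ((abs_nonneg _).trans hN') (exp_pos τ)
  have hKI : 0 ≤ exp τ * (K * I) := (abs_nonneg _).trans hH'
  calc |H' / Nc - H / N| ≤ |H' - H| / Nc + |H| * |N - Nc| / (Nc * N) :=
        abs_div_sub_div_le_s18 _ _ (by linarith [exp_pos (-τ)]) (by linarith [exp_pos (-τ), hN.1])
    _ ≤ exp τ * (K * I) / (exp (-τ) / 2)
          + exp τ * M * (exp τ * I) / (exp (-τ) / 2 * exp (-τ)) := by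
        gcongr
        exact hN.1
    _ = (2 * exp τ ^ 2 * K + 2 * exp τ ^ 4 * M) * I := by
        rw [exp_neg]; field_simp

section TiltedIntegrals

variable {β : Type*} [MeasurableSpace β] {ν : Measure β} {e φ ψ : β → ℝ}

lemma integral_mul_mem_Icc {a b : ℝ} (he_meas : AEStronglyMeasurable e ν)
    (he : ∀ w, e w ∈ Set.Icc a b) (hφ : 0 ≤ᵐ[ν] φ) (hφ₁ : ∫ w, φ w ∂ν = 1) :
    ∫ w, e w * φ w ∂ν ∈ Set.Icc a b := by
  have hφ_int : Integrable φ ν := .of_integral_ne_zero (by simp [hφ₁])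
  have heφ_int : Integrable (fun w => e w * φ w) ν := hφ_int.bdd_mul he_meas
    (ae_of_all _ fun w => abs_le_max_abs_abs (he w).1 (he w).2)
  constructor
  · calc a = ∫ w, a * φ w ∂ν := by rw [integral_const_mul, hφ₁, mul_one]
      _ ≤ ∫ w, e w * φ w ∂ν := integral_mono_ae (hφ_int.const_mul a) heφ_int
          (hφ.mono fun w hw => mul_le_mul_of_nonneg_right (he w).1 hw)
  · calc ∫ w, e w * φ w ∂ν ≤ ∫ w, b * φ w ∂ν := integral_mono_ae heφ_int (hφ_int.const_mul b)
          (hφ.mono fun w hw => mul_le_mul_of_nonneg_right (he w).2 hw)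
      _ = b := by rw [integral_const_mul, hφ₁, mul_one]

lemma abs_integral_mul_sub_integral_mul_le {B : ℝ} {h : β → ℝ}
    (he_meas : AEStronglyMeasurable e ν) (he : ∀ w, |e w| ≤ B) (hψ : Integrable ψ ν)
    (hφ : Integrable φ ν) (hh : Integrable h ν) (hψφ : ∀ w, |ψ w - φ w| ≤ h w) :
    |∫ w, e w * ψ w ∂ν - ∫ w, e w * φ w ∂ν| ≤ B * ∫ w, h w ∂ν := by
  have hbdd : ∀ᵐ w ∂ν, ‖e w‖ ≤ B := ae_of_all _ he
  rw [← integral_sub (hψ.bdd_mul he_meas hbdd) (hφ.bdd_mul he_meas hbdd),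
    ← integral_const_mul, ← Real.norm_eq_abs]
  refine norm_integral_le_of_norm_le (hh.const_mul B) (ae_of_all _ fun w => ?_)
  rw [← mul_sub, norm_mul, Real.norm_eq_abs, Real.norm_eq_abs]
  exact mul_le_mul (he w) (hψφ w) (abs_nonneg _) ((abs_nonneg _).trans (he w))

variable {M F : ℝ} {u v : β → ℝ}

lemma abs_integral_mul_mul_sub_integral_mul_mul_le {B : ℝ} (he_meas : AEStronglyMeasurable e ν)
    (he : ∀ w, |e w| ≤ B) (hu_meas : AEStronglyMeasurable u ν) (hu : ∀ w, |u w| ≤ M)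
    (hv_meas : AEStronglyMeasurable v ν) (hv : ∀ w, |v w| ≤ M) (hφ : Integrable φ ν)
    (hψ_int : Integrable ψ ν) (hψ : ∀ w, |ψ w| ≤ F)
    (hg : Integrable (fun w => |v w - u w| + |ψ w - φ w|) ν) :
    |∫ w, e w * v w * ψ w ∂ν - ∫ w, e w * u w * φ w ∂ν|
      ≤ B * (max M F * ∫ w, |v w - u w| + |ψ w - φ w| ∂ν) := by
  have hbound : ∀ w, |v w * ψ w - u w * φ w| ≤ max M F * (|v w - u w| + |ψ w - φ w|) := by
    intro w
    calc |v w * ψ w - u w * φ w| = |(v w - u w) * ψ w + u w * (ψ w - φ w)| := by ring_nf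
      _ ≤ |v w - u w| * F + M * |ψ w - φ w| := by
        refine (abs_add_le _ _).trans ?_
        rw [abs_mul, abs_mul]
        gcongr
        exacts [hψ w, hu w]
      _ ≤ max M F * (|v w - u w| + |ψ w - φ w|) := by
        rw [mul_add, mul_comm (max M F)]
        gcongr
        exacts [le_max_right M F, le_max_left M F]
  simp only [mul_assoc]
  rw [← integral_const_mul]
  exact abs_integral_mul_sub_integral_mul_le he_meas he (hψ_int.bdd_mul hv_meas (ae_of_all _ hv))
    (hφ.bdd_mul hu_meas (ae_of_all _ hu)) (hg.const_mul _) hbound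

theorem abs_div_min_max_integral_sub_div_integral_le [IsFiniteMeasure ν] {τ : ℝ}
    (he_meas : AEStronglyMeasurable e ν) (he : ∀ w, e w ∈ Set.Icc (exp (-τ)) (exp τ))
    (hu_meas : AEStronglyMeasurable u ν) (hu : ∀ w, |u w| ≤ M)
    (hv_meas : AEStronglyMeasurable v ν) (hv : ∀ w, |v w| ≤ M)
    (hφ : 0 ≤ᵐ[ν] φ) (hφ₁ : ∫ w, φ w ∂ν = 1)
    (hψ_meas : AEStronglyMeasurable ψ ν) (hψ : ∀ w, |ψ w| ≤ F) :
    |(∫ w, e w * v w * ψ w ∂ν) / min (max (∫ w, e w * ψ w ∂ν) (exp (-τ) / 2)) (2 * exp τ)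
      - (∫ w, e w * u w * φ w ∂ν) / ∫ w, e w * φ w ∂ν|
      ≤ (2 * exp τ ^ 2 * max M F + 2 * exp τ ^ 4 * M) * ∫ w, |v w - u w| + |ψ w - φ w| ∂ν := by
  have hφ_int : Integrable φ ν := .of_integral_ne_zero (by simp [hφ₁])
  have hψ_int : Integrable ψ ν := .of_bound hψ_meas F (ae_of_all _ hψ)
  have hg : Integrable (fun w => |v w - u w| + |ψ w - φ w|) ν :=
    ((Integrable.of_bound hv_meas M (ae_of_all _ hv)).sub
      (.of_bound hu_meas M (ae_of_all _ hu))).abs.add (hψ_int.sub hφ_int).abs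
  have he_abs : ∀ w, |e w| ≤ exp τ := fun w =>
    abs_le.2 ⟨by linarith [exp_pos τ, exp_pos (-τ), (he w).1], (he w).2⟩
  refine abs_div_min_max_sub_div_le (integral_mul_mem_Icc he_meas he hφ hφ₁) ?_
    (abs_integral_mul_sub_integral_mul_le he_meas he_abs hψ_int hφ_int hg
      fun w => le_add_of_nonneg_left (abs_nonneg _))
    (abs_integral_mul_mul_sub_integral_mul_mul_le he_meas he_abs hu_meas hu hv_meas hv hφ_int
      hψ_int hψ hg)
  refine abs_le.2 (integral_mul_mem_Icc (he_meas.mul hu_meas) (fun w => abs_le.1 ?_) hφ hφ₁)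
  rw [abs_mul]
  exact mul_le_mul (he_abs w) (hu w) (abs_nonneg _) (exp_pos τ).le

end TiltedIntegrals

section AveragingInL2

variable {α β ε : Type*} [MeasurableSpace α] [MeasurableSpace β]

lemma eLpNorm_two_sq [TopologicalSpace ε] [ContinuousENorm ε] (f : α → ε) (μ : Measure α) :
    eLpNorm f 2 μ ^ 2 = ∫⁻ x, ‖f x‖ₑ ^ 2 ∂μ := by
  simpa using eLpNorm_nnreal_pow_eq_lintegral (f := f) (μ := μ) (p := 2) two_ne_zero

lemma sq_lintegral_le_measure_univ_mul (ν : Measure β) {h : β → ℝ≥0∞} (hh : AEMeasurable h ν) :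
    (∫⁻ w, h w ∂ν) ^ 2 ≤ ν Set.univ * ∫⁻ w, h w ^ 2 ∂ν := by
  have holder := eLpNorm_le_eLpNorm_mul_rpow_measure_univ (p := 1) (q := 2) one_le_two
    hh.aestronglyMeasurable
  have hsqrt : (ν Set.univ ^ (1 / (1 : ℝ≥0∞).toReal - 1 / (2 : ℝ≥0∞).toReal)) ^ 2
      = ν Set.univ := by
    rw [← ENNReal.rpow_natCast, ← ENNReal.rpow_mul]; norm_num
  simpa only [eLpNorm_one_eq_lintegral_enorm, enorm_eq_self, mul_pow, eLpNorm_two_sq, hsqrt,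
    mul_comm (ν Set.univ)] using pow_le_pow_left' holder 2

lemma eLpNorm_integral_snd_le {E : Type*} [NormedAddCommGroup E] [NormedSpace ℝ E]
    {μ : Measure α} {ν : Measure β} [SFinite μ] [IsFiniteMeasure ν] {g : α × β → E}
    (hg : AEStronglyMeasurable g (μ.prod ν)) :
    eLpNorm (fun p => ∫ w, g (p.1, w) ∂ν) 2 (μ.prod ν)
      ≤ ν Set.univ * eLpNorm g 2 (μ.prod ν) := by
  rw [← ENNReal.pow_le_pow_left_iff two_ne_zero, mul_pow, eLpNorm_two_sq, eLpNorm_two_sq,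
    lintegral_prod _ (hg.enorm.pow_const 2), ← lintegral_const_mul' _ _ (by finiteness)]
  refine (lintegral_prod_le _).trans (lintegral_mono_ae ?_)
  filter_upwards [hg.prodMk_left] with x hgx
  calc ∫⁻ _, ‖∫ w, g (x, w) ∂ν‖ₑ ^ 2 ∂ν = ν Set.univ * ‖∫ w, g (x, w) ∂ν‖ₑ ^ 2 := by
        rw [lintegral_const, mul_comm]
    _ ≤ ν Set.univ * (∫⁻ w, ‖g (x, w)‖ₑ ∂ν) ^ 2 := by
        gcongr; exact enorm_integral_le_lintegral_enorm _
    _ ≤ ν Set.univ * (ν Set.univ * ∫⁻ w, ‖g (x, w)‖ₑ ^ 2 ∂ν) := by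
        gcongr; exact sq_lintegral_le_measure_univ_mul ν hgx.enorm
    _ = ν Set.univ ^ 2 * ∫⁻ w, ‖g (x, w)‖ₑ ^ 2 ∂ν := by ring

lemma eLpNorm_withDensity_le [TopologicalSpace ε] [ContinuousENorm ε] {μ : Measure α}
    {ρ : α → ℝ≥0∞} {c : ℝ≥0∞} (hρ : ∀ᵐ x ∂μ, ρ x ≤ c) {p : ℝ≥0∞} (hp : p ≠ ∞) (f : α → ε) :
    eLpNorm f p (μ.withDensity ρ) ≤ c ^ (1 / p).toReal * eLpNorm f p μ := by
  rw [← smul_eq_mul, ← eLpNorm_smul_measure_of_ne_top hp, ← withDensity_const]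
  exact eLpNorm_mono_measure f (withDensity_mono hρ)

lemma eLpNorm_le_eLpNorm_withDensity [TopologicalSpace ε] [ContinuousENorm ε] {μ : Measure α}
    {ρ : α → ℝ≥0∞} {c : ℝ≥0∞} (hc₀ : c ≠ 0) (hc : c ≠ ∞) (hρ : ∀ᵐ x ∂μ, c ≤ ρ x)
    {p : ℝ≥0∞} (hp : p ≠ ∞) (f : α → ε) :
    eLpNorm f p μ ≤ c⁻¹ ^ (1 / p).toReal * eLpNorm f p (μ.withDensity ρ) := by
  rw [← smul_eq_mul, ← eLpNorm_smul_measure_of_ne_top hp, ← withDensity_smul' _ _ (by simpa)]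
  refine eLpNorm_mono_measure f (le_of_eq_of_le withDensity_one.symm (withDensity_mono ?_))
  filter_upwards [hρ] with x hx
  calc (1 : α → ℝ≥0∞) x = c⁻¹ * c := (ENNReal.inv_mul_cancel hc₀ hc).symm
    _ ≤ c⁻¹ * ρ x := by gcongr

lemma eLpNorm_integral_snd_withDensity_le {E : Type*} [NormedAddCommGroup E] [NormedSpace ℝ E]
    {μ : Measure α} {ν : Measure β} [SFinite μ] [IsFiniteMeasure ν] {ρ : α × β → ℝ≥0∞}
    {a b : ℝ≥0∞} (ha₀ : a ≠ 0) (ha : a ≠ ∞) (hρ : ∀ᵐ p ∂μ.prod ν, ρ p ∈ Set.Icc a b)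
    {g : α × β → E} (hg : AEStronglyMeasurable g (μ.prod ν)) :
    eLpNorm (fun p => ∫ w, g (p.1, w) ∂ν) 2 ((μ.prod ν).withDensity ρ)
      ≤ b ^ (2⁻¹ : ℝ) * ν Set.univ * a⁻¹ ^ (2⁻¹ : ℝ)
        * eLpNorm g 2 ((μ.prod ν).withDensity ρ) := by
  have hp : (1 / (2 : ℝ≥0∞)).toReal = 2⁻¹ := by norm_num
  calc eLpNorm (fun p => ∫ w, g (p.1, w) ∂ν) 2 ((μ.prod ν).withDensity ρ)
      ≤ b ^ (2⁻¹ : ℝ) * eLpNorm (fun p => ∫ w, g (p.1, w) ∂ν) 2 (μ.prod ν) :=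
        hp ▸ eLpNorm_withDensity_le (hρ.mono fun _ hp => hp.2) ENNReal.ofNat_ne_top _
    _ ≤ b ^ (2⁻¹ : ℝ) * (ν Set.univ * eLpNorm g 2 (μ.prod ν)) := by
        gcongr; exact eLpNorm_integral_snd_le hg
    _ ≤ b ^ (2⁻¹ : ℝ) * (ν Set.univ
          * (a⁻¹ ^ (2⁻¹ : ℝ) * eLpNorm g 2 ((μ.prod ν).withDensity ρ))) := by
        gcongr
        exact hp ▸ eLpNorm_le_eLpNorm_withDensity ha₀ ha (hρ.mono fun _ hp => hp.1)
          ENNReal.ofNat_ne_top _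
    _ = _ := by ring

end AveragingInL2

lemma exp_inner_mem_Icc_s18 {E : Type*} [NormedAddCommGroup E] [InnerProductSpace ℝ E] {x y : E}
    {a b : ℝ} (hx : ‖x‖ ≤ a) (hy : ‖y‖ ≤ b) :
    exp ⟪x, y⟫ ∈ Set.Icc (exp (-(a * b))) (exp (a * b)) := by
  have h := (abs_real_inner_le_norm x y).trans
    (mul_le_mul hx hy (norm_nonneg _) ((norm_nonneg _).trans hx))
  exact ⟨exp_le_exp.2 (neg_le_of_abs_le h), exp_le_exp.2 (le_of_abs_le h)⟩

/-- Lipschitz stability of the tilted conditional-mean estimator: with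
`η(x) = ∫_𝒲 exp⟨δ,s(x,w)⟩ μ(x,w) f(x,w) dw`, `m = η/ν`, and the estimated
`m̂ = η̂/ν̂†` built from any `μ̂` bounded by `M` and `f̂` with values in
`[0, F]`, there is a finite constant `C₂` (depending only on
`(τ, M, F, f_min, f_max, |𝒲|)`) such that
`‖m̂ − m‖_{L²(P)} ≤ C₂·(‖μ̂ − μ‖_{L²(P)} + ‖f̂ − f‖_{L²(P)})`. -/
theorem tilted_conditional_mean_lipschitz_stability
    {X : Type*} [MeasurableSpace X] (PX : Measure X) [IsProbabilityMeasure PX]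
    {q : ℕ} (Wset : Set (EuclideanSpace ℝ (Fin q)))
    (hWmeas : MeasurableSet Wset) (hWvol : MeasureTheory.volume Wset < ⊤)
    (f : X × EuclideanSpace ℝ (Fin q) → ℝ) (hf_meas : Measurable f)
    (fmin fmax : ℝ) (hfmin : 0 < fmin)
    (hf_bdd : ∀ x w, w ∈ Wset → fmin ≤ f (x, w) ∧ f (x, w) ≤ fmax)
    (hf_int : ∀ᵐ x ∂PX, ∫ w in Wset, f (x, w) = 1)
    (s : X × EuclideanSpace ℝ (Fin q) → EuclideanSpace ℝ (Fin q))
    (hs_meas : Measurable s) (Ms : ℝ) (hs_bdd : ∀ p, ‖s p‖ ≤ Ms)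
    (δ : EuclideanSpace ℝ (Fin q)) (Δ : ℝ) (hδ : ‖δ‖ ≤ Δ)
    (μ : X × EuclideanSpace ℝ (Fin q) → ℝ) (hμ_meas : Measurable μ)
    (M : ℝ) (hμ_bdd : ∀ p, |μ p| ≤ M) (F : ℝ) :
    ∃ C₂ : ℝ,
      ∀ μhat fhat : X × EuclideanSpace ℝ (Fin q) → ℝ,
        Measurable μhat → (∀ p, |μhat p| ≤ M) →
        Measurable fhat → (∀ p, 0 ≤ fhat p ∧ fhat p ≤ F) →
        ∀ (Pm : Measure (X × EuclideanSpace ℝ (Fin q))),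
          Pm = (PX.prod (MeasureTheory.volume.restrict Wset)).withDensity
                (fun p => ENNReal.ofReal (f p)) →
        ∀ ν νhat νdag η ηhat m mhat : X → ℝ,
          (∀ x, ν x = ∫ w in Wset, Real.exp ⟪δ, s (x, w)⟫ * f (x, w)) →
          (∀ x, νhat x = ∫ w in Wset, Real.exp ⟪δ, s (x, w)⟫ * fhat (x, w)) →
          (∀ x, νdag x = min (max (νhat x) (Real.exp (-(Δ * Ms)) / 2))
              (2 * Real.exp (Δ * Ms))) →
          (∀ x, η x = ∫ w in Wset, Real.exp ⟪δ, s (x, w)⟫ * μ (x, w) * f (x, w)) →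
          (∀ x, ηhat x = ∫ w in Wset,
              Real.exp ⟪δ, s (x, w)⟫ * μhat (x, w) * fhat (x, w)) →
          (∀ x, m x = η x / ν x) →
          (∀ x, mhat x = ηhat x / νdag x) →
          eLpNorm (fun p => mhat p.1 - m p.1) 2 Pm
            ≤ ENNReal.ofReal C₂ *
              (eLpNorm (fun p => μhat p - μ p) 2 Pm
                + eLpNorm (fun p => fhat p - f p) 2 Pm) := by
  set τ := Δ * Ms
  set W := volume.restrict Wset
  have : IsFiniteMeasure W := isFiniteMeasure_restrict.2 hWvol.ne
  set C₁ := 2 * exp τ ^ 2 * max M F + 2 * exp τ ^ 4 * M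
  set C : ℝ≥0∞ :=
    ENNReal.ofReal fmax ^ (2⁻¹ : ℝ) * W Set.univ * (ENNReal.ofReal fmin)⁻¹ ^ (2⁻¹ : ℝ)
  refine ⟨(ENNReal.ofReal C₁ * C).toReal, ?_⟩
  intro μhat fhat hμhat_meas hμhat_bdd hfhat_meas hfhat_bdd Pm hPm
    ν νhat νdag η ηhat m mhat hν hνhat hνdag hη hηhat hm hmhat
  set g := fun p => |μhat p - μ p| + |fhat p - f p|
  have hpointwise : ∀ᵐ x ∂PX, ‖mhat x - m x‖ ≤ C₁ * ‖∫ w, g (x, w) ∂W‖ := by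
    filter_upwards [hf_int] with x hx
    have hsec : ∀ {h : X × EuclideanSpace ℝ (Fin q) → ℝ}, Measurable h →
        AEStronglyMeasurable (fun w => h (x, w)) W :=
      fun hh => (hh.comp measurable_prodMk_left).aestronglyMeasurable
    have hf_nonneg : 0 ≤ᵐ[W] fun w => f (x, w) := by
      filter_upwards [ae_restrict_mem hWmeas] with w hw
      exact hfmin.le.trans (hf_bdd x w hw).1
    rw [hm, hmhat, hη, hν, hηhat, hνdag, hνhat, Real.norm_eq_abs,
      Real.norm_of_nonneg (integral_nonneg fun w => add_nonneg (abs_nonneg _) (abs_nonneg _))]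
    exact abs_div_min_max_integral_sub_div_integral_le
      (hsec (h := fun p => exp ⟪δ, s p⟫) (by fun_prop)) (fun w => exp_inner_mem_Icc_s18 hδ (hs_bdd _))
      (hsec hμ_meas) (fun w => hμ_bdd _) (hsec hμhat_meas) (fun w => hμhat_bdd _) hf_nonneg hx
      (hsec hfhat_meas) (fun w => abs_le.2 ⟨by linarith [hfhat_bdd (x, w)], (hfhat_bdd _).2⟩)
  have hdensity : ∀ᵐ p ∂PX.prod W,
      ENNReal.ofReal (f p) ∈ Set.Icc (ENNReal.ofReal fmin) (ENNReal.ofReal fmax) := by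
    filter_upwards [Measure.quasiMeasurePreserving_snd.ae (ae_restrict_mem hWmeas)] with p hp
    exact ⟨ENNReal.ofReal_le_ofReal (hf_bdd p.1 p.2 hp).1,
      ENNReal.ofReal_le_ofReal (hf_bdd p.1 p.2 hp).2⟩
  have hg : eLpNorm g 2 Pm
      ≤ eLpNorm (fun p => μhat p - μ p) 2 Pm + eLpNorm (fun p => fhat p - f p) 2 Pm := by
    refine (eLpNorm_add_le (by fun_prop) (by fun_prop) one_le_two).trans_eq ?_
    simp_rw [← Real.norm_eq_abs, eLpNorm_norm]
  rw [ENNReal.ofReal_toReal (by finiteness), mul_assoc]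
  calc eLpNorm (fun p => mhat p.1 - m p.1) 2 Pm
      ≤ ENNReal.ofReal C₁ * eLpNorm (fun p => ∫ w, g (p.1, w) ∂W) 2 Pm := by
        refine eLpNorm_le_mul_eLpNorm_of_ae_le_mul ?_ 2
        rw [hPm]
        exact (withDensity_absolutelyContinuous _ _).ae_le
          (Measure.quasiMeasurePreserving_fst.ae hpointwise)
    _ ≤ ENNReal.ofReal C₁ * (C * eLpNorm g 2 Pm) := by
        rw [hPm]
        gcongr
        exact eLpNorm_integral_snd_withDensity_le (by simpa using hfmin) ENNReal.ofReal_ne_top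
          hdensity (by fun_prop)
    _ ≤ _ := by gcongr
end

section
/- The omitted-variable bias satisfies the exact identity E[μ_s·α_s] − E[μ·α] = −E[(μ − μ_s)(α − α_s)], and hence the sharp bound |E[μ_s·α_s] − E[μ·α]| ≤ √(E[(μ − μ_s)²])·√(E[(α − α_s)²]) = S·C_Y·C_D, where E[(α − α_s)²] = E[α²] − E[α_s²] because α_s is the L² projection of α onto 𝒢-measurable functions. -/
/-!
Conditional expectation onto `𝒢` is the orthogonal projection of `L²` onto the `𝒢`-measurable
functions: `E[g · E[f | 𝒢]] = E[g · f]` for `𝒢`-measurable `g ∈ L²`. Expanding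
`E[(μ - μ_s)(α - α_s)]`, both cross terms `E[μ_s (α - α_s)]` and `E[(μ - μ_s) α_s]` vanish, the
second because `μ_s = E[μ | 𝒢]` by the tower property; this is the identity. Cauchy–Schwarz gives
the bound, and the same orthogonality gives `E[(α - α_s)²] = E[α²] - E[α_s²]`.
-/

open MeasureTheory

namespace MeasureTheory

variable {Ω : Type*} {m m₀ : MeasurableSpace Ω} {μ : Measure Ω}

theorem abs_integral_mul_le_sqrt_mul_sqrt {f g : Ω → ℝ} (hf : MemLp f 2 μ) (hg : MemLp g 2 μ) :
    |∫ ω, f ω * g ω ∂μ| ≤ √(∫ ω, f ω ^ 2 ∂μ) * √(∫ ω, g ω ^ 2 ∂μ) := by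
  have holder := integral_mul_norm_le_Lp_mul_Lq Real.HolderConjugate.two_two
    (by simpa using hf) (by simpa using hg)
  simp only [Real.norm_eq_abs, Real.rpow_two, sq_abs, ← Real.sqrt_eq_rpow] at holder
  calc |∫ ω, f ω * g ω ∂μ| ≤ ∫ ω, |f ω * g ω| ∂μ := abs_integral_le_integral_abs
    _ = ∫ ω, |f ω| * |g ω| ∂μ := by simp only [abs_mul]
    _ ≤ _ := holder

theorem integral_sub_mul_sub {a b c d : Ω → ℝ} (ha : MemLp a 2 μ) (hb : MemLp b 2 μ)
    (hc : MemLp c 2 μ) (hd : MemLp d 2 μ) :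
    ∫ ω, (a ω - b ω) * (c ω - d ω) ∂μ
      = ∫ ω, a ω * c ω ∂μ - ∫ ω, a ω * d ω ∂μ - ∫ ω, b ω * c ω ∂μ + ∫ ω, b ω * d ω ∂μ := by
  have hac : Integrable (fun ω => a ω * c ω) μ := ha.integrable_mul hc
  have had : Integrable (fun ω => a ω * d ω) μ := ha.integrable_mul hd
  have hbc : Integrable (fun ω => b ω * c ω) μ := hb.integrable_mul hc
  have hbd : Integrable (fun ω => b ω * d ω) μ := hb.integrable_mul hd
  simp only [mul_sub, sub_mul]
  rw [integral_sub (hac.sub' hbc) (had.sub' hbd), integral_sub hac hbc, integral_sub had hbd]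
  ring

theorem integral_mul_condExp_of_aestronglyMeasurable_left (hm : m ≤ m₀) [SigmaFinite (μ.trim hm)]
    {f g : Ω → ℝ} (hg : AEStronglyMeasurable[m] g μ) (hgf : Integrable (g * f) μ)
    (hf : Integrable f μ) :
    ∫ ω, g ω * μ[f | m] ω ∂μ = ∫ ω, g ω * f ω ∂μ := by
  calc ∫ ω, g ω * μ[f | m] ω ∂μ = ∫ ω, μ[g * f | m] ω ∂μ :=
        integral_congr_ae (condExp_mul_of_aestronglyMeasurable_left hg hgf hf).symm
    _ = ∫ ω, g ω * f ω ∂μ := integral_condExp hm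

variable [IsFiniteMeasure μ]

theorem integral_mul_condExp_of_stronglyMeasurable_left (hm : m ≤ m₀) {f g : Ω → ℝ}
    (hg : StronglyMeasurable[m] g) (hgL2 : MemLp g 2 μ) (hf : MemLp f 2 μ) :
    ∫ ω, g ω * μ[f | m] ω ∂μ = ∫ ω, g ω * f ω ∂μ :=
  integral_mul_condExp_of_aestronglyMeasurable_left hm hg.aestronglyMeasurable
    (hgL2.integrable_mul hf) (hf.integrable one_le_two)

theorem integral_sub_condExp_sq (hm : m ≤ m₀) {f : Ω → ℝ} (hf : MemLp f 2 μ) :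
    ∫ ω, (f ω - μ[f | m] ω) ^ 2 ∂μ = ∫ ω, f ω ^ 2 ∂μ - ∫ ω, μ[f | m] ω ^ 2 ∂μ := by
  have hfm : MemLp (μ[f | m]) 2 μ := hf.condExp one_le_two
  have hproj := integral_mul_condExp_of_stronglyMeasurable_left hm stronglyMeasurable_condExp hfm hf
  simp only [sq]
  rw [integral_sub_mul_sub hf hfm hf hfm, hproj]
  simp only [mul_comm (f _)]
  ring

theorem integral_condExp_sub_condExp_mul_sub_condExp {m₁ m₂ : MeasurableSpace Ω} (h₁₂ : m₁ ≤ m₂)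
    (h₂ : m₂ ≤ m₀) {f g : Ω → ℝ} (hf : MemLp f 2 μ) (hg : MemLp g 2 μ) :
    ∫ ω, (μ[f | m₂] ω - μ[f | m₁] ω) * (g ω - μ[g | m₁] ω) ∂μ
      = ∫ ω, μ[f | m₂] ω * g ω ∂μ - ∫ ω, μ[f | m₁] ω * μ[g | m₁] ω ∂μ := by
  have h₁ : m₁ ≤ m₀ := h₁₂.trans h₂
  have hf₁ : MemLp (μ[f | m₁]) 2 μ := hf.condExp one_le_two
  have hf₂ : MemLp (μ[f | m₂]) 2 μ := hf.condExp one_le_two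
  have hg₁ : MemLp (μ[g | m₁]) 2 μ := hg.condExp one_le_two
  have hf₁g : ∫ ω, μ[f | m₁] ω * g ω ∂μ = ∫ ω, μ[f | m₁] ω * μ[g | m₁] ω ∂μ :=
    (integral_mul_condExp_of_stronglyMeasurable_left h₁ stronglyMeasurable_condExp hf₁ hg).symm
  have hf₂g₁ : ∫ ω, μ[f | m₂] ω * μ[g | m₁] ω ∂μ = ∫ ω, μ[f | m₁] ω * μ[g | m₁] ω ∂μ := by
    calc ∫ ω, μ[f | m₂] ω * μ[g | m₁] ω ∂μ = ∫ ω, μ[g | m₁] ω * μ[μ[f | m₂] | m₁] ω ∂μ := by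
          rw [integral_mul_condExp_of_stronglyMeasurable_left h₁ stronglyMeasurable_condExp hg₁ hf₂]
          simp only [mul_comm]
      _ = ∫ ω, μ[f | m₁] ω * μ[g | m₁] ω ∂μ := by
          refine integral_congr_ae ?_
          filter_upwards [condExp_condExp_of_le h₁₂ h₂ (f := f)] with ω hω
          rw [hω, mul_comm]
  rw [integral_sub_mul_sub hf₂ hf₁ hg hg₁, hf₁g, hf₂g₁]
  ring

end MeasureTheory

/-- Omitted-variable-bias identity and sharp bound: with long and short
regressions `μ = E[Y|ℋ]`, `μ_s = E[Y|𝒢]` and Riesz representers `α`,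
`α_s = E[α|𝒢]`, one has
`E[μ_s·α_s] − E[μ·α] = −E[(μ − μ_s)(α − α_s)]`, hence
`|E[μ_s·α_s] − E[μ·α]| ≤ √E[(μ−μ_s)²]·√E[(α−α_s)²] = S·C_Y·C_D`,
where `E[(α − α_s)²] = E[α²] − E[α_s²]`, `S = σ_s·ν_s`,
`C_Y = √(E[(μ−μ_s)²])/σ_s`, `C_D = √(E[α²]−E[α_s²])/ν_s`,
`σ_s = √E[(Y−μ_s)²]` and `ν_s = √E[α_s²]`. -/
theorem omitted_variable_bias_identity_and_bound
    {Ω : Type*} {mF : MeasurableSpace Ω} (P : Measure Ω) [IsProbabilityMeasure P]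
    (mG mH : MeasurableSpace Ω) (hGH : mG ≤ mH) (hHF : mH ≤ mF)
    (Y α : Ω → ℝ) (hY : MemLp Y 2 P) (hα : MemLp α 2 P)
    (hσ : 0 < ∫ ω, (Y ω - (P[Y | mG]) ω) ^ 2 ∂P)
    (hν : 0 < ∫ ω, ((P[α | mG]) ω) ^ 2 ∂P) :
    ((∫ ω, (P[Y | mG]) ω * (P[α | mG]) ω ∂P)
        - (∫ ω, (P[Y | mH]) ω * α ω ∂P)
      = -∫ ω, ((P[Y | mH]) ω - (P[Y | mG]) ω) * (α ω - (P[α | mG]) ω) ∂P)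
    ∧ (|(∫ ω, (P[Y | mG]) ω * (P[α | mG]) ω ∂P)
          - (∫ ω, (P[Y | mH]) ω * α ω ∂P)|
        ≤ Real.sqrt (∫ ω, ((P[Y | mH]) ω - (P[Y | mG]) ω) ^ 2 ∂P)
          * Real.sqrt (∫ ω, (α ω - (P[α | mG]) ω) ^ 2 ∂P))
    ∧ (Real.sqrt (∫ ω, ((P[Y | mH]) ω - (P[Y | mG]) ω) ^ 2 ∂P)
          * Real.sqrt (∫ ω, (α ω - (P[α | mG]) ω) ^ 2 ∂P)
        = (Real.sqrt (∫ ω, (Y ω - (P[Y | mG]) ω) ^ 2 ∂P)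
            * Real.sqrt (∫ ω, ((P[α | mG]) ω) ^ 2 ∂P))
          * (Real.sqrt (∫ ω, ((P[Y | mH]) ω - (P[Y | mG]) ω) ^ 2 ∂P)
              / Real.sqrt (∫ ω, (Y ω - (P[Y | mG]) ω) ^ 2 ∂P))
          * (Real.sqrt ((∫ ω, α ω ^ 2 ∂P) - ∫ ω, ((P[α | mG]) ω) ^ 2 ∂P)
              / Real.sqrt (∫ ω, ((P[α | mG]) ω) ^ 2 ∂P)))
    ∧ ((∫ ω, (α ω - (P[α | mG]) ω) ^ 2 ∂P)
        = (∫ ω, α ω ^ 2 ∂P) - ∫ ω, ((P[α | mG]) ω) ^ 2 ∂P) := by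
  have hbias := integral_condExp_sub_condExp_mul_sub_condExp (μ := P) hGH hHF hY hα
  have hpythagoras := integral_sub_condExp_sq (μ := P) (hGH.trans hHF) hα
  have hidentity : (∫ ω, (P[Y | mG]) ω * (P[α | mG]) ω ∂P) - (∫ ω, (P[Y | mH]) ω * α ω ∂P)
      = -∫ ω, ((P[Y | mH]) ω - (P[Y | mG]) ω) * (α ω - (P[α | mG]) ω) ∂P := by
    rw [hbias]; ring
  refine ⟨hidentity, ?_, ?_, hpythagoras⟩
  · rw [hidentity, abs_neg]
    exact abs_integral_mul_le_sqrt_mul_sqrt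
      ((hY.condExp one_le_two).sub (hY.condExp one_le_two)) (hα.sub (hα.condExp one_le_two))
  · have hσ' := (Real.sqrt_pos.mpr hσ).ne'
    have hν' := (Real.sqrt_pos.mpr hν).ne'
    rw [← hpythagoras]
    field_simp
end
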